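/- arXiv:2511.01257 — 3 statements merged into one kernel-verified Lean document; each statement's English description precedes it below -/
import Mathlib

section
/- Let $\delta \le \Delta$ be powers of $p^{-1}$ and let $\mathcal{P}$ be a multiset of points such that for every ball $Q$ of radius $r$ with $\Delta \le r \le 1$ one has $|\mathcal{P} \cap Q| \le K r |\mathcal{P}|$. For a tube $T$ of width $\delta$ and a parameter $b \ge 1$, let $N_{\Delta,b}(T)$ denote the number of $\Delta$-cubes $Q$ with $|T \cap Q \cap \mathcal{P}| \ge b$. Then $\sum_{T : N_{\Delta,b}(T) \ge 2} N_{\Delta,b}(T)^2 \lesssim K \log(1/\Delta) \cdot |\mathcal{P}|^2 / b^2$, where the sum is over all dyadic $\delta$-tubes. -/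
open scoped Classical

noncomputable section

/-- A `δ`-tube in `ℤ_p²`: the `δ`-neighborhood of the line `y = a x + b`. -/
def tube (p : ℕ) [Fact p.Prime] (δ : ℝ) (a b : ℤ_[p]) : Set (ℤ_[p] × ℤ_[p]) :=
  {z | ‖z.2 - (a * z.1 + b)‖ ≤ δ}

/-- The collection of (dyadic) `δ`-tubes. -/
def tubes (p : ℕ) [Fact p.Prime] (δ : ℝ) : Set (Set (ℤ_[p] × ℤ_[p])) :=
  {T | ∃ a b, T = tube p δ a b}

/-- The number of points of the multiset `P` lying in the set `A` (with multiplicity). -/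
def mcount (p : ℕ) [Fact p.Prime] (P : Multiset (ℤ_[p] × ℤ_[p])) (A : Set (ℤ_[p] × ℤ_[p])) : ℕ :=
  (P.filter (· ∈ A)).card

/-- The collection of `Δ`-cubes (p-adic balls of radius `Δ`). -/
def cubes (p : ℕ) [Fact p.Prime] (Δ : ℝ) : Set (Set (ℤ_[p] × ℤ_[p])) :=
  {Q | ∃ x, Q = Metric.closedBall x Δ}

/-- The `Δ`-cubes meeting the multiset `P` (the set `𝔻_Δ(P)`). -/
def cubesOf (p : ℕ) [Fact p.Prime] (Δ : ℝ) (P : Multiset (ℤ_[p] × ℤ_[p])) :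
    Set (Set (ℤ_[p] × ℤ_[p])) :=
  {Q | Q ∈ cubes p Δ ∧ 0 < mcount p P Q}

/-- `NDb p Δ P b T` : the number of `Δ`-cubes `Q` with `|T ∩ Q ∩ P| ≥ b`. -/
def NDb (p : ℕ) [Fact p.Prime] (Δ : ℝ) (P : Multiset (ℤ_[p] × ℤ_[p])) (b : ℕ)
    (T : Set (ℤ_[p] × ℤ_[p])) : ℕ :=
  Set.ncard {Q | Q ∈ cubes p Δ ∧ b ≤ mcount p P (T ∩ Q)}

/-- The closed `w`-neighborhood (thickening) of a set in `ℤ_p²`. -/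
def thicken (p : ℕ) [Fact p.Prime] (A : Set (ℤ_[p] × ℤ_[p])) (w : ℝ) : Set (ℤ_[p] × ℤ_[p]) :=
  {z | ∃ y ∈ A, dist z y ≤ w}


/-!
For a tube `T` with `N ≥ 2` rich `Δ`-cubes, the `N (N - 1) ≥ N² / 2` ordered pairs of distinct
rich cubes produce at least `b² N² / 2` ordered pairs of points of `P ∩ T` at distance `> Δ`.
Two points at distance `ρ = p⁻ᵏ > δ` lie in at most `p ^ k = ρ⁻¹` common `δ`-tubes, so summing
over all tubes bounds `b² ∑ N(T)²` by twice `∑ ρ(z, w)⁻¹` over pairs at distance `> Δ`. Sorting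
the partners `w` of a fixed `z` by scale `p⁻ᵏ`, `k < m`, and using `|P ∩ B(z, p⁻ᵏ)| ≤ K p⁻ᵏ |P|`,
each scale contributes at most `K |P|`, whence the bound `2 m K |P|² ≤ 3 K log(1/Δ) |P|²`.
The multiset `P` is handled as the family of its elements indexed by `P.ToType`.
-/

open Finset Metric IsUltrametricDist

instance IsUltrametricDist.prod {X Y : Type*} [PseudoMetricSpace X] [PseudoMetricSpace Y]
    [IsUltrametricDist X] [IsUltrametricDist Y] : IsUltrametricDist (X × Y) where
  dist_triangle_max x y z := by
    simp only [Prod.dist_eq]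
    exact max_le
      ((dist_triangle_max _ _ _).trans (max_le_max (le_max_left _ _) (le_max_left _ _)))
      ((dist_triangle_max _ _ _).trans (max_le_max (le_max_right _ _) (le_max_right _ _)))

lemma IsUltrametricDist.lt_dist_of_closedBall_ne {X : Type*} [PseudoMetricSpace X]
    [IsUltrametricDist X] {x y z w : X} {r : ℝ} (hne : closedBall x r ≠ closedBall y r)
    (hz : z ∈ closedBall x r) (hw : w ∈ closedBall y r) : r < dist z w := by
  by_contra! h
  exact hne <| (closedBall_eq_of_mem hz).trans <|
    (closedBall_eq_of_mem (mem_closedBall'.2 h)).trans (closedBall_eq_of_mem hw).symm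

namespace PadicInt

variable {p : ℕ} [Fact p.Prime]

lemma norm_le_pow_iff_dvd (x : ℤ_[p]) (n : ℕ) :
    ‖x‖ ≤ (p : ℝ) ^ (-(n : ℤ)) ↔ (p : ℤ_[p]) ^ n ∣ x := by
  rw [norm_le_pow_iff_mem_span_pow, Ideal.mem_span_singleton]

lemma norm_sub_appr_le (x : ℤ_[p]) (n : ℕ) : ‖x - x.appr n‖ ≤ (p : ℝ) ^ (-(n : ℤ)) :=
  (norm_le_pow_iff_mem_span_pow _ _).2 (appr_spec n x)

end PadicInt

open PadicInt

section Cubes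

variable {p : ℕ} [Fact p.Prime] {Δ : ℝ} {Q Q' : Set (ℤ_[p] × ℤ_[p])} {z w : ℤ_[p] × ℤ_[p]}

lemma exists_dist_eq_zpow_neg (h : 0 < dist z w) :
    ∃ k : ℕ, dist z w = (p : ℝ) ^ (-(k : ℤ)) := by
  have key : ∀ x : ℤ_[p], 0 < ‖x‖ → ∃ k : ℕ, ‖x‖ = (p : ℝ) ^ (-(k : ℤ)) := fun x hx =>
    ⟨x.valuation, norm_eq_zpow_neg_valuation (norm_pos_iff.1 hx)⟩
  rw [Prod.dist_eq, dist_eq_norm, dist_eq_norm] at h ⊢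
  rcases max_choice ‖z.1 - w.1‖ ‖z.2 - w.2‖ with hmax | hmax <;> rw [hmax] at h ⊢ <;> exact key _ h

lemma eq_of_mem_cubes (hQ : Q ∈ cubes p Δ) (hQ' : Q' ∈ cubes p Δ) (hz : z ∈ Q) (hz' : z ∈ Q') :
    Q = Q' := by
  obtain ⟨x, rfl⟩ := hQ
  obtain ⟨x', rfl⟩ := hQ'
  rw [closedBall_eq_of_mem hz, closedBall_eq_of_mem hz']

lemma lt_dist_of_mem_cubes (hQ : Q ∈ cubes p Δ) (hQ' : Q' ∈ cubes p Δ) (hne : Q ≠ Q')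
    (hz : z ∈ Q) (hw : w ∈ Q') : Δ < dist z w := by
  obtain ⟨x, rfl⟩ := hQ
  obtain ⟨x', rfl⟩ := hQ'
  exact lt_dist_of_closedBall_ne hne hz hw

end Cubes

section Tubes

variable {p : ℕ} [Fact p.Prime] {δ : ℝ} {a b a' b' : ℤ_[p]} {z w : ℤ_[p] × ℤ_[p]}

lemma tube_subset_of_norm_sub_le (ha : ‖a - a'‖ ≤ δ) (hb : ‖b - b'‖ ≤ δ) :
    tube p δ a b ⊆ tube p δ a' b' := by
  intro z hz
  have hsplit : z.2 - (a' * z.1 + b') = (z.2 - (a * z.1 + b)) + ((a - a') * z.1 + (b - b')) := by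
    ring
  have hslope : ‖(a - a') * z.1‖ ≤ δ := by
    rw [norm_mul]
    exact (mul_le_of_le_one_right (norm_nonneg _) (norm_le_one _)).trans ha
  change ‖z.2 - (a' * z.1 + b')‖ ≤ δ
  rw [hsplit]
  exact (norm_add_le_max _ _).trans (max_le hz ((norm_add_le_max _ _).trans (max_le hslope hb)))

lemma tube_eq_of_norm_sub_le (ha : ‖a - a'‖ ≤ δ) (hb : ‖b - b'‖ ≤ δ) :
    tube p δ a b = tube p δ a' b' :=
  (tube_subset_of_norm_sub_le ha hb).antisymm
    (tube_subset_of_norm_sub_le (norm_sub_rev a a' ▸ ha) (norm_sub_rev b b' ▸ hb))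

lemma tube_eq_tube_of_mem (hz : z ∈ tube p δ a b) :
    tube p δ a b = tube p δ a (z.2 - a * z.1) := by
  have hδ : 0 ≤ δ := (norm_nonneg _).trans hz
  refine tube_eq_of_norm_sub_le (by simpa using hδ) ?_
  rw [show b - (z.2 - a * z.1) = -(z.2 - (a * z.1 + b)) by ring, norm_neg]
  exact hz

lemma tube_through_eq_of_norm_sub_le (ha : ‖a - a'‖ ≤ δ) :
    tube p δ a (z.2 - a * z.1) = tube p δ a' (z.2 - a' * z.1) := by
  refine tube_eq_of_norm_sub_le ha ?_
  rw [show z.2 - a * z.1 - (z.2 - a' * z.1) = -((a - a') * z.1) by ring, norm_neg, norm_mul]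
  exact (mul_le_of_le_one_right (norm_nonneg _) (norm_le_one _)).trans ha

lemma norm_sub_mul_le_of_mem_tube (hz : z ∈ tube p δ a b) (hw : w ∈ tube p δ a b) :
    ‖(z.2 - w.2) - a * (z.1 - w.1)‖ ≤ δ := by
  rw [show (z.2 - w.2) - a * (z.1 - w.1) = (z.2 - (a * z.1 + b)) + -(w.2 - (a * w.1 + b)) by ring]
  exact (norm_add_le_max _ _).trans (max_le hz (by rw [norm_neg]; exact hw))

lemma notMem_tube_of_norm_lt (hδ : δ < ‖z.2 - w.2‖) (hslope : ‖z.1 - w.1‖ < ‖z.2 - w.2‖)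
    (hz : z ∈ tube p δ a b) : w ∉ tube p δ a b := by
  intro hw
  have hau : ‖a * (z.1 - w.1)‖ < ‖z.2 - w.2‖ := by
    rw [norm_mul]
    exact (mul_le_of_le_one_left (norm_nonneg _) (norm_le_one a)).trans_lt hslope
  have := calc
    ‖z.2 - w.2‖ = ‖((z.2 - w.2) - a * (z.1 - w.1)) + a * (z.1 - w.1)‖ := by rw [sub_add_cancel]
    _ ≤ max ‖(z.2 - w.2) - a * (z.1 - w.1)‖ ‖a * (z.1 - w.1)‖ := norm_add_le_max _ _
    _ < ‖z.2 - w.2‖ := max_lt ((norm_sub_mul_le_of_mem_tube hz hw).trans_lt hδ) hau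
  exact lt_irrefl _ this

variable (p) in
def tubeFinset (n : ℕ) : Finset (Set (ℤ_[p] × ℤ_[p])) :=
  (range (p ^ n) ×ˢ range (p ^ n)).image fun ij => tube p ((p : ℝ) ^ (-(n : ℤ))) ij.1 ij.2

lemma coe_tubeFinset (n : ℕ) : (tubeFinset p n : Set (Set (ℤ_[p] × ℤ_[p]))) =
    tubes p ((p : ℝ) ^ (-(n : ℤ))) := by
  ext T
  simp only [tubeFinset, coe_image, Set.mem_image, mem_coe, mem_product, mem_range, tubes,
    Set.mem_ofPred_eq]
  constructor
  · rintro ⟨ij, -, rfl⟩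
    exact ⟨_, _, rfl⟩
  · rintro ⟨a, b, rfl⟩
    exact ⟨(a.appr n, b.appr n), ⟨appr_lt a n, appr_lt b n⟩,
      tube_eq_of_norm_sub_le (by rw [norm_sub_rev]; exact norm_sub_appr_le a n)
        (by rw [norm_sub_rev]; exact norm_sub_appr_le b n)⟩

end Tubes

section TubeCount

variable {p : ℕ} [Fact p.Prime] {n k : ℕ} {z w : ℤ_[p] × ℤ_[p]}

lemma card_tubes_through_le_of_norm_fst (hk : k ≤ n) (hu : ‖z.1 - w.1‖ = (p : ℝ) ^ (-(k : ℤ))) :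
    #{T ∈ tubeFinset p n | z ∈ T ∧ w ∈ T} ≤ p ^ k := by
  set δ : ℝ := (p : ℝ) ^ (-(n : ℤ))
  set u := z.1 - w.1
  set d := z.2 - w.2
  have hslope : ∀ T ∈ {T ∈ tubeFinset p n | z ∈ T ∧ w ∈ T},
      ∃ a, T = tube p δ a (z.2 - a * z.1) ∧ ‖d - a * u‖ ≤ δ := by
    intro T hT
    obtain ⟨hT, hz, hw⟩ := mem_filter.1 hT
    obtain ⟨ij, -, rfl⟩ := mem_image.1 hT
    exact ⟨_, tube_eq_tube_of_mem hz, norm_sub_mul_le_of_mem_tube hz hw⟩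
  obtain hE | ⟨T₀, hT₀⟩ := {T ∈ tubeFinset p n | z ∈ T ∧ w ∈ T}.eq_empty_or_nonempty
  · simp [hE]
  obtain ⟨a₀, -, ha₀⟩ := hslope T₀ hT₀
  have hδ : δ = ‖(p : ℤ_[p]) ^ (n - k)‖ * ‖u‖ := by
    rw [hu, ← norm_p_pow k, ← norm_mul, ← pow_add, Nat.sub_add_cancel hk, norm_p_pow]
  have hu0 : 0 < ‖u‖ := hu ▸ zpow_pos (by exact_mod_cast (Fact.out : p.Prime).pos) _
  -- tubes through `z` and `w` have slopes `a₀ + p ^ (n - k) * c`; only `c` mod `p ^ k` matters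
  calc _ ≤ #((range (p ^ k)).image fun c : ℕ =>
        tube p δ (a₀ + p ^ (n - k) * c) (z.2 - (a₀ + p ^ (n - k) * c) * z.1)) := card_le_card ?_
    _ ≤ p ^ k := card_image_le.trans (card_range _).le
  intro T hT
  obtain ⟨a, rfl, ha⟩ := hslope T hT
  have hdiff : ‖a - a₀‖ * ‖u‖ ≤ ‖(p : ℤ_[p]) ^ (n - k)‖ * ‖u‖ := by
    rw [← norm_mul, ← hδ, show (a - a₀) * u = (d - a₀ * u) + -(d - a * u) by ring]
    exact (norm_add_le_max _ _).trans (max_le ha₀ (by rwa [norm_neg]))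
  obtain ⟨c, hc⟩ := (norm_le_pow_iff_dvd (a - a₀) (n - k)).1
    (norm_p_pow (p := p) (n - k) ▸ le_of_mul_le_mul_right hdiff hu0)
  refine mem_image.2 ⟨c.appr k, mem_range.2 (appr_lt c k), tube_through_eq_of_norm_sub_le ?_⟩
  rw [show a₀ + p ^ (n - k) * (c.appr k : ℤ_[p]) - a = p ^ (n - k) * -(c - c.appr k) by
    linear_combination -hc, norm_mul, norm_neg, hδ, hu]
  exact mul_le_mul_of_nonneg_left (norm_sub_appr_le c k) (norm_nonneg _)

lemma card_tubes_through_le (hk : k < n) (hzw : dist z w = (p : ℝ) ^ (-(k : ℤ))) :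
    #{T ∈ tubeFinset p n | z ∈ T ∧ w ∈ T} ≤ p ^ k := by
  rw [Prod.dist_eq, dist_eq_norm, dist_eq_norm] at hzw
  rcases lt_or_ge ‖z.1 - w.1‖ ‖z.2 - w.2‖ with hslope | hslope
  · have hδ : (p : ℝ) ^ (-(n : ℤ)) < ‖z.2 - w.2‖ := by
      rw [← max_eq_right hslope.le, hzw]
      exact zpow_lt_zpow_right₀ (by exact_mod_cast (Fact.out : p.Prime).one_lt) (by omega)
    suffices {T ∈ tubeFinset p n | z ∈ T ∧ w ∈ T} = ∅ by simp [this]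
    refine filter_eq_empty_iff.2 fun T hT ⟨hz, hw⟩ => ?_
    obtain ⟨ij, -, rfl⟩ := mem_image.1 hT
    exact notMem_tube_of_norm_lt hδ hslope hz hw
  · exact card_tubes_through_le_of_norm_fst hk.le (by rw [← hzw, max_eq_left hslope])

lemma card_tubes_through_le_inv_dist (h : (p : ℝ) ^ (-(n : ℤ)) < dist z w) :
    (#{T ∈ tubeFinset p n | z ∈ T ∧ w ∈ T} : ℝ) ≤ (dist z w)⁻¹ := by
  have hp : (1 : ℝ) < p := by exact_mod_cast (Fact.out : p.Prime).one_lt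
  obtain ⟨k, hk⟩ := exists_dist_eq_zpow_neg (h.trans' (by positivity))
  have hkn : k < n := by
    rw [hk, zpow_lt_zpow_iff_right₀ hp] at h
    omega
  rw [hk, ← zpow_neg, neg_neg, zpow_natCast]
  exact_mod_cast card_tubes_through_le hkn hk

end TubeCount

section Family

variable {p : ℕ} [Fact p.Prime] {ι : Type*} [Fintype ι] (x : ι → ℤ_[p] × ℤ_[p])

lemma mcount_map_univ (A : Set (ℤ_[p] × ℤ_[p])) :
    mcount p (univ.val.map x) A = #{i | x i ∈ A} := by
  simp [mcount, Multiset.filter_map, Finset.card]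

def farPairs (Δ : ℝ) (T : Set (ℤ_[p] × ℤ_[p])) : Finset (ι × ι) :=
  {ij | x ij.1 ∈ T ∧ x ij.2 ∈ T ∧ Δ < dist (x ij.1) (x ij.2)}

lemma sq_mul_NDb_sq_le_card_farPairs {Δ : ℝ} {b : ℕ} {T : Set (ℤ_[p] × ℤ_[p])}
    (hN : 2 ≤ NDb p Δ (univ.val.map x) b T) :
    b ^ 2 * NDb p Δ (univ.val.map x) b T ^ 2 ≤ 2 * #(farPairs x Δ T) := by
  rw [NDb] at hN ⊢
  set R := {Q | Q ∈ cubes p Δ ∧ b ≤ mcount p (univ.val.map x) (T ∩ Q)}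
  have hR : R.Finite := Set.finite_of_ncard_ne_zero (by omega)
  rw [Set.ncard_eq_toFinset_card R hR] at hN ⊢
  set F := hR.toFinset
  let pts : Set (ℤ_[p] × ℤ_[p]) → Finset ι := fun Q => {i | x i ∈ T ∩ Q}
  have hmemF : ∀ {Q}, Q ∈ F → Q ∈ cubes p Δ ∧ b ≤ #(pts Q) := fun hQ => by
    obtain ⟨hQ, hb⟩ := hR.mem_toFinset.1 hQ
    rw [mcount_map_univ] at hb
    exact ⟨hQ, by convert hb⟩
  have hdisj : (F.offDiag : Set (Set (ℤ_[p] × ℤ_[p]) × Set (ℤ_[p] × ℤ_[p]))).PairwiseDisjoint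
      fun QQ => pts QQ.1 ×ˢ pts QQ.2 := by
    rintro ⟨Q₁, Q₁'⟩ h₁ ⟨Q₂, Q₂'⟩ h₂ hne
    refine disjoint_left.2 fun ⟨i, j⟩ hij hij' => hne ?_
    simp only [mem_coe, mem_offDiag] at h₁ h₂
    simp only [pts, mem_product, mem_filter_univ] at hij hij'
    exact Prod.ext (eq_of_mem_cubes (hmemF h₁.1).1 (hmemF h₂.1).1 hij.1.2 hij'.1.2)
      (eq_of_mem_cubes (hmemF h₁.2.1).1 (hmemF h₂.2.1).1 hij.2.2 hij'.2.2)
  have hfar : F.offDiag.biUnion (fun QQ => pts QQ.1 ×ˢ pts QQ.2) ⊆ farPairs x Δ T := by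
    intro ij h
    obtain ⟨⟨Q, Q'⟩, hQQ, hij⟩ := mem_biUnion.1 h
    simp only [mem_offDiag] at hQQ
    simp only [pts, farPairs, mem_product, mem_filter_univ] at hij ⊢
    exact ⟨hij.1.1, hij.2.1, lt_dist_of_mem_cubes (hmemF hQQ.1).1 (hmemF hQQ.2.1).1 hQQ.2.2
      hij.1.2 hij.2.2⟩
  have hNN : #F * #F ≤ 2 * (#F * #F - #F) := by
    have := Nat.mul_le_mul_left #F hN
    omega
  calc b ^ 2 * #F ^ 2 = b * b * (#F * #F) := by ring
    _ ≤ 2 * ∑ QQ ∈ F.offDiag, b * b := by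
        rw [sum_const, smul_eq_mul, offDiag_card]
        nlinarith
    _ ≤ 2 * ∑ QQ ∈ F.offDiag, #(pts QQ.1 ×ˢ pts QQ.2) := by
        gcongr with QQ hQQ
        rw [card_product]
        exact Nat.mul_le_mul (hmemF (mem_offDiag.1 hQQ).1).2 (hmemF (mem_offDiag.1 hQQ).2.1).2
    _ = 2 * #(F.offDiag.biUnion fun QQ => pts QQ.1 ×ˢ pts QQ.2) := by rw [card_biUnion hdisj]
    _ ≤ 2 * #(farPairs x Δ T) := by gcongr

lemma sum_card_farPairs_le {n : ℕ} {Δ : ℝ} (hΔ : (p : ℝ) ^ (-(n : ℤ)) ≤ Δ) :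
    (∑ T ∈ tubeFinset p n, #(farPairs x Δ T) : ℝ) ≤
      ∑ i, ∑ j with Δ < dist (x i) (x j), (dist (x i) (x j))⁻¹ := by
  have hcount := sum_card_bipartiteAbove_eq_sum_card_bipartiteBelow
    (fun T (ij : ι × ι) => x ij.1 ∈ T ∧ x ij.2 ∈ T ∧ Δ < dist (x ij.1) (x ij.2))
    (s := tubeFinset p n) (t := univ)
  simp only [bipartiteAbove, bipartiteBelow] at hcount
  unfold farPairs
  rw [← Nat.cast_sum, hcount, Nat.cast_sum, Fintype.sum_prod_type]
  simp_rw [sum_filter]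
  gcongr with i _ j _
  split_ifs with h
  · simp only [h, and_true]
    exact card_tubes_through_le_inv_dist (hΔ.trans_lt h)
  · simp [h]

lemma sum_inv_dist_le {m : ℕ} {K : ℝ} (z : ℤ_[p] × ℤ_[p])
    (hK : ∀ k < m, (#{j | x j ∈ closedBall z ((p : ℝ) ^ (-(k : ℤ)))} : ℝ) ≤
      K * (p : ℝ) ^ (-(k : ℤ)) * Fintype.card ι) :
    ∑ j with (p : ℝ) ^ (-(m : ℤ)) < dist z (x j), (dist z (x j))⁻¹ ≤ m * K * Fintype.card ι := by
  have hp : (1 : ℝ) < p := by exact_mod_cast (Fact.out : p.Prime).one_lt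
  set ball := fun k : ℕ => closedBall z ((p : ℝ) ^ (-(k : ℤ)))
  -- a partner at distance `p⁻ᵏ` is counted in the ball of radius `p⁻ᵏ` with weight `p ^ k`
  have hlayer : ∀ j ∈ ({j | (p : ℝ) ^ (-(m : ℤ)) < dist z (x j)} : Finset ι),
      (dist z (x j))⁻¹ ≤ ∑ k ∈ range m, if x j ∈ ball k then (p : ℝ) ^ k else 0 := by
    intro j hj
    replace hj := (mem_filter_univ _).1 hj
    obtain ⟨k, hk⟩ := exists_dist_eq_zpow_neg (hj.trans' (by positivity))
    have hkm : k < m := by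
      rw [hk, zpow_lt_zpow_iff_right₀ hp] at hj
      omega
    refine le_of_eq_of_le ?_ (single_le_sum (f := fun k => if x j ∈ ball k then (p : ℝ) ^ k else 0)
      (fun _ _ => by positivity) (mem_range.2 hkm))
    rw [if_pos (mem_closedBall'.2 hk.le), hk, ← zpow_neg, neg_neg, zpow_natCast]
  calc _ ≤ ∑ j with (p : ℝ) ^ (-(m : ℤ)) < dist z (x j),
        ∑ k ∈ range m, if x j ∈ ball k then (p : ℝ) ^ k else 0 := sum_le_sum hlayer
    _ ≤ ∑ j, ∑ k ∈ range m, if x j ∈ ball k then (p : ℝ) ^ k else 0 :=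
        sum_le_sum_of_subset_of_nonneg (filter_subset _ _)
          fun _ _ _ => sum_nonneg fun _ _ => by positivity
    _ = ∑ k ∈ range m, (p : ℝ) ^ k * #{j | x j ∈ ball k} := by
        rw [sum_comm]
        simp [sum_ite, mul_comm]
    _ ≤ ∑ k ∈ range m, (p : ℝ) ^ k * (K * (p : ℝ) ^ (-(k : ℤ)) * Fintype.card ι) :=
        sum_le_sum fun k hk => mul_le_mul_of_nonneg_left (hK k (mem_range.1 hk)) (by positivity)
    _ = m * K * Fintype.card ι := by
        simp_rw [zpow_neg, zpow_natCast]
        rw [sum_congr rfl fun k _ => show (p : ℝ) ^ k * (K * ((p : ℝ) ^ k)⁻¹ * Fintype.card ι) =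
          K * Fintype.card ι by field_simp, sum_const, card_range, nsmul_eq_mul]
        ring

end Family

theorem sq_mul_sum_NDb_sq_le {p : ℕ} [Fact p.Prime] {ι : Type*} [Fintype ι] (x : ι → ℤ_[p] × ℤ_[p])
    {n m : ℕ} (hmn : m ≤ n) (b : ℕ) {K : ℝ}
    (hK : ∀ r : ℝ, (p : ℝ) ^ (-(m : ℤ)) ≤ r → r ≤ 1 → ∀ z : ℤ_[p] × ℤ_[p],
      (mcount p (univ.val.map x) (closedBall z r) : ℝ) ≤ K * r * Fintype.card ι) :
    (b : ℝ) ^ 2 * ∑ T ∈ tubeFinset p n with 2 ≤ NDb p ((p : ℝ) ^ (-(m : ℤ))) (univ.val.map x) b T,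
      (NDb p ((p : ℝ) ^ (-(m : ℤ))) (univ.val.map x) b T : ℝ) ^ 2 ≤
      2 * m * K * Fintype.card ι ^ 2 := by
  have hp : (1 : ℝ) < p := by exact_mod_cast (Fact.out : p.Prime).one_lt
  set Δ : ℝ := (p : ℝ) ^ (-(m : ℤ))
  have hrich : b ^ 2 * ∑ T ∈ tubeFinset p n with 2 ≤ NDb p Δ (univ.val.map x) b T,
      NDb p Δ (univ.val.map x) b T ^ 2 ≤ 2 * ∑ T ∈ tubeFinset p n, #(farPairs x Δ T) := by
    rw [mul_sum, mul_sum]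
    exact (sum_le_sum fun T hT => sq_mul_NDb_sq_le_card_farPairs x (mem_filter.1 hT).2).trans
      (sum_le_sum_of_subset (filter_subset _ _))
  have hball : ∀ i, ∑ j with Δ < dist (x i) (x j), (dist (x i) (x j))⁻¹ ≤
      m * K * Fintype.card ι := fun i =>
    sum_inv_dist_le x (x i) fun k hk => by
      rw [← mcount_map_univ]
      exact hK _ (zpow_le_zpow_right₀ hp.le (by omega)) (zpow_le_one_of_nonpos₀ hp.le (by omega)) _
  calc _ = ((b ^ 2 * ∑ T ∈ tubeFinset p n with 2 ≤ NDb p Δ (univ.val.map x) b T,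
        NDb p Δ (univ.val.map x) b T ^ 2 : ℕ) : ℝ) := by push_cast; rfl
    _ ≤ 2 * (∑ T ∈ tubeFinset p n, #(farPairs x Δ T) : ℝ) := by exact_mod_cast hrich
    _ ≤ 2 * ∑ i, ∑ j with Δ < dist (x i) (x j), (dist (x i) (x j))⁻¹ := by
        gcongr
        exact sum_card_farPairs_le x (zpow_le_zpow_right₀ hp.le (by omega))
    _ ≤ 2 * ∑ _i : ι, m * K * Fintype.card ι := by gcongr with i; exact hball i
    _ = 2 * m * K * Fintype.card ι ^ 2 := by
        rw [sum_const, card_univ, nsmul_eq_mul]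
        ring

lemma two_mul_le_three_mul_log {p : ℕ} (hp : 2 ≤ p) (m : ℕ) :
    2 * (m : ℝ) ≤ 3 * Real.log (1 / (p : ℝ) ^ (-(m : ℤ))) := by
  rw [one_div, ← zpow_neg, neg_neg, zpow_natCast, Real.log_pow]
  have hlog : (2 : ℝ) / 3 < Real.log p :=
    (by linarith [Real.log_two_gt_d9] : (2 : ℝ) / 3 < Real.log 2).trans_le
      (Real.log_le_log (by norm_num) (by exact_mod_cast hp))
  nlinarith [(m.cast_nonneg : (0 : ℝ) ≤ m)]

/-- weighted second-moment bound for rich tubes. -/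
theorem statement0 :
    ∃ C : ℝ, 0 < C ∧
    ∀ (p : ℕ) [inst : Fact p.Prime] (n m : ℕ) (δ Δ : ℝ)
      (P : Multiset (ℤ_[p] × ℤ_[p])) (K : ℝ) (b : ℕ),
      δ = (p : ℝ) ^ (-(n : ℤ)) → Δ = (p : ℝ) ^ (-(m : ℤ)) → δ ≤ Δ → 1 ≤ b →
      (∀ r : ℝ, Δ ≤ r → r ≤ 1 → ∀ x : ℤ_[p] × ℤ_[p],
        (mcount p P (Metric.closedBall x r) : ℝ) ≤ K * r * Multiset.card P) →
      ∑ᶠ T ∈ {T | T ∈ tubes p δ ∧ 2 ≤ NDb p Δ P b T}, ((NDb p Δ P b T : ℝ)) ^ 2 ≤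
        C * K * Real.log (1 / Δ) * (Multiset.card P : ℝ) ^ 2 / (b : ℝ) ^ 2 := by
  refine ⟨3, by norm_num, ?_⟩
  intro p _ n m δ Δ P K b hδ hΔ hδΔ hb hK
  subst hδ hΔ
  have hp : (1 : ℝ) < p := by exact_mod_cast (Fact.out : p.Prime).one_lt
  have hmn : m ≤ n := by
    rw [zpow_le_zpow_iff_right₀ hp] at hδΔ
    omega
  have hP : univ.val.map (fun i : P.ToType => i.1) = P := Multiset.map_univ_coe P
  have hmain := sq_mul_sum_NDb_sq_le (fun i : P.ToType => i.1) hmn b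
    (by rwa [hP, Multiset.card_coe])
  rw [hP, Multiset.card_coe] at hmain
  have hKP : 0 ≤ K * (Multiset.card P : ℝ) ^ 2 := by
    have := hK 1 (zpow_le_one_of_nonpos₀ hp.le (by omega)) le_rfl 0
    nlinarith [(Nat.cast_nonneg _ : (0 : ℝ) ≤ mcount p P (closedBall 0 1)),
      (Nat.cast_nonneg _ : (0 : ℝ) ≤ Multiset.card P)]
  have hrich : {T | T ∈ tubes p ((p : ℝ) ^ (-(n : ℤ))) ∧ 2 ≤ NDb p ((p : ℝ) ^ (-(m : ℤ))) P b T} =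
      ↑({T ∈ tubeFinset p n | 2 ≤ NDb p ((p : ℝ) ^ (-(m : ℤ))) P b T}) := by
    rw [coe_filter, ← coe_tubeFinset]
    rfl
  rw [hrich, finsum_mem_coe_finset, le_div_iff₀ (by positivity), mul_comm]
  calc _ ≤ 2 * m * K * (Multiset.card P : ℝ) ^ 2 := hmain
    _ = 2 * m * (K * (Multiset.card P : ℝ) ^ 2) := by ring
    _ ≤ 3 * Real.log (1 / (p : ℝ) ^ (-(m : ℤ))) * (K * (Multiset.card P : ℝ) ^ 2) :=
        mul_le_mul_of_nonneg_right (two_mul_le_three_mul_log (Fact.out : p.Prime).two_le m) hKP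
    _ = _ := by ring
end
end

section
/- Under the hypotheses of the weighted second-moment bound for rich tubes (a $(\Delta,1,K)$-spaced multiset $\mathcal{P}$ of points), if $\mathcal{T}_{a,b}$ is a set of distinct dyadic $\delta$-tubes each satisfying $N_{\Delta,b}(T) \ge a$ for some $a \ge 2$, then $|\mathcal{T}_{a,b}| \lesssim K \log(1/\Delta) \cdot |\mathcal{P}|^2/(a^2 b^2)$. -/
open scoped Classical

noncomputable section

/-! ### Auxiliary counting lemmas for multisets -/

section Count
variable {α β ι : Type*}

/-- Classical filter of a multiset (fixed decidability instance). -/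
private noncomputable def cfilter (q : α → Prop) (s : Multiset α) : Multiset α :=
  @Multiset.filter α q (Classical.decPred q) s

private lemma cfilter_eq (q : α → Prop) [i : DecidablePred q] (s : Multiset α) :
    cfilter q s = s.filter q :=
  @Multiset.filter_congr α q q (Classical.decPred q) i s (fun _ _ => Iff.rfl)

private lemma cfilter_le (q : α → Prop) (s : Multiset α) : cfilter q s ≤ s :=
  Multiset.filter_le _ _

private lemma mem_cfilter {q : α → Prop} {s : Multiset α} {x : α} :
    x ∈ cfilter q s ↔ x ∈ s ∧ q x :=
  Multiset.mem_filter

private lemma cfilter_mono_pred {q r : α → Prop} (h : ∀ x, q x → r x) (s : Multiset α) :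
    cfilter q s ≤ cfilter r s := by
  unfold cfilter
  exact Multiset.monotone_filter_right s (fun x => h x)

private lemma cfilter_eq_zero {q : α → Prop} {s : Multiset α} (h : ∀ x ∈ s, ¬ q x) :
    cfilter q s = 0 :=
  Multiset.filter_eq_nil.mpr h

private lemma cfilter_congr {q r : α → Prop} {s : Multiset α} (h : ∀ x ∈ s, q x ↔ r x) :
    cfilter q s = cfilter r s :=
  Multiset.filter_congr h

private lemma cfilter_add_cfilter (q r : α → Prop) (s : Multiset α) :
    cfilter q s + cfilter r s = cfilter (fun x => q x ∨ r x) s + cfilter (fun x => q x ∧ r x) s := by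
  unfold cfilter
  induction s using Multiset.induction_on with
  | empty => simp
  | cons x s ih =>
    by_cases hq : q x <;> by_cases hr : r x
    · rw [Multiset.filter_cons_of_pos _ hq, Multiset.filter_cons_of_pos _ hr,
        @Multiset.filter_cons_of_pos _ (fun y => q y ∨ r y) (Classical.decPred _) _ s (Or.inl hq),
        @Multiset.filter_cons_of_pos _ (fun y => q y ∧ r y) (Classical.decPred _) _ s ⟨hq, hr⟩,
        Multiset.cons_add, Multiset.cons_add, Multiset.add_cons, Multiset.add_cons, ih]
    · rw [Multiset.filter_cons_of_pos _ hq, Multiset.filter_cons_of_neg _ hr,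
        @Multiset.filter_cons_of_pos _ (fun y => q y ∨ r y) (Classical.decPred _) _ s (Or.inl hq),
        @Multiset.filter_cons_of_neg _ (fun y => q y ∧ r y) (Classical.decPred _) _ s (fun h => hr h.2),
        Multiset.cons_add, Multiset.cons_add, ih]
    · rw [Multiset.filter_cons_of_neg _ hq, Multiset.filter_cons_of_pos _ hr,
        @Multiset.filter_cons_of_pos _ (fun y => q y ∨ r y) (Classical.decPred _) _ s (Or.inr hr),
        @Multiset.filter_cons_of_neg _ (fun y => q y ∧ r y) (Classical.decPred _) _ s (fun h => hq h.1),
        Multiset.add_cons, Multiset.cons_add, ih]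
    · rw [Multiset.filter_cons_of_neg _ hq, Multiset.filter_cons_of_neg _ hr,
        @Multiset.filter_cons_of_neg _ (fun y => q y ∨ r y) (Classical.decPred _) _ s (fun h => h.elim hq hr),
        @Multiset.filter_cons_of_neg _ (fun y => q y ∧ r y) (Classical.decPred _) _ s (fun h => hq h.1), ih]

private lemma my_filter_sum_le (s : Multiset α) (t : Finset ι) (q : ι → α → Prop)
    (hdisj : ∀ i ∈ t, ∀ j ∈ t, i ≠ j → ∀ x, q i x → ¬ q j x) :
    ∑ i ∈ t, cfilter (q i) s ≤ cfilter (fun x => ∃ j ∈ t, q j x) s := by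
  induction t using Finset.induction_on with
  | empty => simpa using Multiset.zero_le _
  | @insert i t hi ih =>
    rw [Finset.sum_insert hi]
    have h1 : ∑ j ∈ t, cfilter (q j) s ≤ cfilter (fun x => ∃ j ∈ t, q j x) s := by
      apply ih
      intro i' hi' j' hj' hne
      exact hdisj i' (Finset.mem_insert_of_mem hi') j' (Finset.mem_insert_of_mem hj') hne
    calc cfilter (q i) s + ∑ j ∈ t, cfilter (q j) s
        ≤ cfilter (q i) s + cfilter (fun x => ∃ j ∈ t, q j x) s := add_le_add (le_refl _) h1
      _ = cfilter (fun x => q i x ∨ ∃ j ∈ t, q j x) s +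
          cfilter (fun x => q i x ∧ ∃ j ∈ t, q j x) s := cfilter_add_cfilter _ _ s
      _ ≤ cfilter (fun x => ∃ j ∈ insert i t, q j x) s := by
        have h2 : cfilter (fun x => q i x ∧ ∃ j ∈ t, q j x) s = 0 := by
          apply cfilter_eq_zero
          rintro x _ ⟨hqi, j, hjt, hqj⟩
          exact hdisj i (Finset.mem_insert_self i t) j (Finset.mem_insert_of_mem hjt)
            (fun h => hi (h ▸ hjt)) x hqi hqj
        rw [h2, add_zero]
        apply le_of_eq
        apply cfilter_congr
        intro x _
        simp [Finset.mem_insert, or_and_right, exists_or]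

private lemma my_sum_map_swap [AddCommMonoid β] (s : Multiset α) (t : Finset ι) (f : ι → α → β) :
    ∑ i ∈ t, (s.map (f i)).sum = (s.map (fun x => ∑ i ∈ t, f i x)).sum := by
  induction t using Finset.induction_on with
  | empty => simp
  | @insert i t hi ih =>
    rw [Finset.sum_insert hi, ih]
    rw [← Multiset.sum_map_add]
    congr 1
    apply Multiset.map_congr rfl
    intro x _
    rw [Finset.sum_insert hi]

private lemma my_sum_map_ite (s : Multiset α) (q : α → Prop) (c : ℕ) :
    (s.map (fun x => if q x then c else 0)).sum = c * (cfilter q s).card := by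
  unfold cfilter
  induction s using Multiset.induction_on with
  | empty => simp
  | cons x s ih =>
    rw [Multiset.map_cons, Multiset.sum_cons, ih]
    by_cases h : q x
    · rw [if_pos h, Multiset.filter_cons_of_pos _ h, Multiset.card_cons, Nat.mul_succ]
      exact Nat.add_comm _ _
    · rw [if_neg h, Multiset.filter_cons_of_neg _ h, zero_add]

private lemma my_card_filter_eq_sum (s : Multiset α) (q : α → Prop) :
    (cfilter q s).card = (s.map (fun x => if q x then 1 else 0)).sum := by
  rw [my_sum_map_ite, one_mul]

private lemma my_sum_map_mono (s t : Multiset α) (h : s ≤ t) (g : α → ℕ) :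
    (s.map g).sum ≤ (t.map g).sum := by
  obtain ⟨u, rfl⟩ := Multiset.le_iff_exists_add.mp h
  simp

private lemma my_card_finset_sum (t : Finset ι) (f : ι → Multiset α) :
    (∑ i ∈ t, f i).card = ∑ i ∈ t, (f i).card := by
  induction t using Finset.induction_on with
  | empty => simp
  | @insert i t hi ih => rw [Finset.sum_insert hi, Finset.sum_insert hi, Multiset.card_add, ih]

private lemma my_map_finset_sum (t : Finset ι) (f : ι → Multiset α) (g : α → β) :
    (∑ i ∈ t, f i).map g = ∑ i ∈ t, (f i).map g := by
  induction t using Finset.induction_on with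
  | empty => simp
  | @insert i t hi ih => rw [Finset.sum_insert hi, Finset.sum_insert hi, Multiset.map_add, ih]

private lemma my_sum_finset_sum [AddCommMonoid β] (t : Finset ι) (f : ι → Multiset β) :
    (∑ i ∈ t, f i).sum = ∑ i ∈ t, (f i).sum := by
  induction t using Finset.induction_on with
  | empty => simp
  | @insert i t hi ih => rw [Finset.sum_insert hi, Finset.sum_insert hi, Multiset.sum_add, ih]

end Count

/-! ### Auxiliary geometric lemmas in `ℤ_p²` -/

section Aux
variable {p : ℕ} [hp : Fact p.Prime]

private lemma padic_norm_sub_le (x y : ℤ_[p]) : ‖x - y‖ ≤ max ‖x‖ ‖y‖ := by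
  simpa [sub_eq_add_neg] using PadicInt.nonarchimedean x (-y)

private lemma padic_dist_ultra (x y z : ℤ_[p]) : dist x z ≤ max (dist x y) (dist y z) := by
  rw [dist_eq_norm, dist_eq_norm, dist_eq_norm]
  have e : x - z = (x - y) + (y - z) := by ring
  rw [e]; exact PadicInt.nonarchimedean _ _

private lemma dist_ultra (x y z : ℤ_[p] × ℤ_[p]) : dist x z ≤ max (dist x y) (dist y z) := by
  rw [Prod.dist_eq, Prod.dist_eq, Prod.dist_eq]
  calc max (dist x.1 z.1) (dist x.2 z.2)
      ≤ max (max (dist x.1 y.1) (dist y.1 z.1)) (max (dist x.2 y.2) (dist y.2 z.2)) :=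
        max_le_max (padic_dist_ultra _ _ _) (padic_dist_ultra _ _ _)
    _ = max (max (dist x.1 y.1) (dist x.2 y.2)) (max (dist y.1 z.1) (dist y.2 z.2)) :=
        max_max_max_comm _ _ _ _

private lemma pt_dist_le_one (z x : ℤ_[p] × ℤ_[p]) : dist z x ≤ 1 := by
  rw [Prod.dist_eq]
  refine max_le ?_ ?_ <;> rw [dist_eq_norm] <;> exact PadicInt.norm_le_one _

private lemma cube_recenter {Δ : ℝ} {Q : Set (ℤ_[p] × ℤ_[p])} (hQ : Q ∈ cubes p Δ)
    {z : ℤ_[p] × ℤ_[p]} (hz : z ∈ Q) : Q = Metric.closedBall z Δ := by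
  obtain ⟨x, rfl⟩ := hQ
  rw [Metric.mem_closedBall] at hz
  ext w
  simp only [Metric.mem_closedBall]
  constructor
  · intro hw
    exact le_trans (dist_ultra w x z) (max_le hw (by rwa [dist_comm]))
  · intro hw
    exact le_trans (dist_ultra w z x) (max_le hw hz)

private lemma cube_eq_of_mem {Δ : ℝ} {Q R : Set (ℤ_[p] × ℤ_[p])} (hQ : Q ∈ cubes p Δ)
    (hR : R ∈ cubes p Δ) {x : ℤ_[p] × ℤ_[p]} (hxQ : x ∈ Q) (hxR : x ∈ R) : Q = R :=
  (cube_recenter hQ hxQ).trans (cube_recenter hR hxR).symm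

private lemma cube_disjoint {Δ : ℝ} {Q R : Set (ℤ_[p] × ℤ_[p])} (hQ : Q ∈ cubes p Δ)
    (hR : R ∈ cubes p Δ) (hne : Q ≠ R) {z w : ℤ_[p] × ℤ_[p]} (hz : z ∈ Q) (hw : w ∈ R) :
    Δ < dist z w := by
  by_contra h
  push_neg at h
  apply hne
  have hwQ : w ∈ Q := by
    rw [cube_recenter hQ hz, Metric.mem_closedBall, dist_comm]; exact h
  exact cube_eq_of_mem hQ hR hwQ hw

private lemma padic_norm_pow_form {x : ℤ_[p]} (hx : x ≠ 0) :
    ∃ j : ℕ, ‖x‖ = (p : ℝ) ^ (-(j : ℤ)) := by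
  refine ⟨x.valuation, ?_⟩
  exact PadicInt.norm_eq_zpow_neg_valuation hx

private lemma dist_pow_form {z w : ℤ_[p] × ℤ_[p]} (h : 0 < dist z w) :
    ∃ j : ℕ, dist z w = (p : ℝ) ^ (-(j : ℤ)) := by
  rw [Prod.dist_eq] at h ⊢
  rcases max_cases (dist z.1 w.1) (dist z.2 w.2) with ⟨he, _⟩ | ⟨he, _⟩ <;> rw [he] at h ⊢
  · have : z.1 - w.1 ≠ 0 := by
      intro h0; rw [dist_eq_norm, h0] at h; simp at h
    rw [dist_eq_norm]; exact padic_norm_pow_form this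
  · have : z.2 - w.2 ≠ 0 := by
      intro h0; rw [dist_eq_norm, h0] at h; simp at h
    rw [dist_eq_norm]; exact padic_norm_pow_form this

private lemma tube_eq_of_close {δ : ℝ} {a b a' b' : ℤ_[p]} (h1 : ‖a - a'‖ ≤ δ)
    (h2 : ‖b - b'‖ ≤ δ) : tube p δ a b = tube p δ a' b' := by
  have key : ∀ (a b a' b' : ℤ_[p]), ‖a - a'‖ ≤ δ → ‖b - b'‖ ≤ δ →
      tube p δ a b ⊆ tube p δ a' b' := by
    intro a b a' b' h1 h2 z hz
    have hz' : ‖z.2 - (a * z.1 + b)‖ ≤ δ := hz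
    show ‖z.2 - (a' * z.1 + b')‖ ≤ δ
    have e : z.2 - (a' * z.1 + b') = (z.2 - (a * z.1 + b)) + ((a - a') * z.1 + (b - b')) := by
      ring
    rw [e]
    refine le_trans (PadicInt.nonarchimedean _ _) (max_le hz' ?_)
    refine le_trans (PadicInt.nonarchimedean _ _) (max_le ?_ h2)
    calc ‖(a - a') * z.1‖ = ‖a - a'‖ * ‖z.1‖ := norm_mul _ _
      _ ≤ ‖a - a'‖ * 1 :=
          mul_le_mul_of_nonneg_left (PadicInt.norm_le_one _) (norm_nonneg _)
      _ ≤ δ := by rwa [mul_one]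
  refine subset_antisymm (key a b a' b' h1 h2) (key a' b' a b ?_ ?_)
  · rwa [norm_sub_rev]
  · rwa [norm_sub_rev]

/-- chosen slope of a tube -/
private def tslope (p : ℕ) [Fact p.Prime] (δ : ℝ) (T : Set (ℤ_[p] × ℤ_[p])) : ℤ_[p] :=
  if h : T ∈ tubes p δ then h.choose else 0

/-- chosen offset of a tube -/
private def toffset (p : ℕ) [Fact p.Prime] (δ : ℝ) (T : Set (ℤ_[p] × ℤ_[p])) : ℤ_[p] :=
  if h : T ∈ tubes p δ then h.choose_spec.choose else 0

private lemma tube_spec {δ : ℝ} {T : Set (ℤ_[p] × ℤ_[p])} (h : T ∈ tubes p δ) :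
    T = tube p δ (tslope p δ T) (toffset p δ T) := by
  rw [tslope, toffset, dif_pos h, dif_pos h]
  exact h.choose_spec.choose_spec

private lemma tubes_finite (n : ℕ) : (tubes p ((p : ℝ) ^ (-(n : ℤ)))).Finite := by
  set δ : ℝ := (p : ℝ) ^ (-(n : ℤ)) with hδdef
  haveI : NeZero (p ^ n) := ⟨pow_ne_zero n hp.out.pos.ne'⟩
  set f : Set (ℤ_[p] × ℤ_[p]) → ZMod (p ^ n) × ZMod (p ^ n) :=
    fun T => (PadicInt.toZModPow n (tslope p δ T), PadicInt.toZModPow n (toffset p δ T)) with hf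
  apply Set.Finite.of_finite_image (f := f) (Set.toFinite _)
  intro T hT T' hT' heq
  rw [hf] at heq
  simp only [Prod.mk.injEq] at heq
  have key : ∀ x y : ℤ_[p], PadicInt.toZModPow n x = PadicInt.toZModPow n y → ‖x - y‖ ≤ δ := by
    intro x y hxy
    rw [hδdef, PadicInt.norm_le_pow_iff_mem_span_pow, ← PadicInt.ker_toZModPow,
      RingHom.mem_ker, map_sub, sub_eq_zero]
    exact hxy
  rw [tube_spec hT, tube_spec hT']
  exact tube_eq_of_close (key _ _ heq.1) (key _ _ heq.2)

private lemma tube_two_point (n j : ℕ) (hjn : j < n) (z w : ℤ_[p] × ℤ_[p])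
    (hd : dist z w = (p : ℝ) ^ (-(j : ℤ))) :
    {T | T ∈ tubes p ((p : ℝ) ^ (-(n : ℤ))) ∧ z ∈ T ∧ w ∈ T}.ncard ≤ p ^ j := by
  set δ : ℝ := (p : ℝ) ^ (-(n : ℤ)) with hδdef
  have hp1 : (1:ℝ) < p := by exact_mod_cast hp.out.one_lt
  have hppos : (0:ℝ) < p := lt_trans one_pos hp1
  have hδpos : (0:ℝ) < δ := zpow_pos hppos _
  have hδlt : δ < dist z w := by
    rw [hd, hδdef]
    exact zpow_lt_zpow_right₀ hp1 (by omega)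
  set S := {T | T ∈ tubes p δ ∧ z ∈ T ∧ w ∈ T} with hS
  rcases S.eq_empty_or_nonempty with hE | ⟨T₀, hT₀⟩
  · rw [hE]; simp
  obtain ⟨hT₀t, hzT₀, hwT₀⟩ := hT₀
  set a₀ := tslope p δ T₀
  have key : ∀ T ∈ S, ‖tslope p δ T - a₀‖ ≤ (p:ℝ) ^ ((j:ℤ) - n) := by
    intro T hT
    obtain ⟨hTt, hzT, hwT⟩ := hT
    have est : ∀ (T' : Set (ℤ_[p] × ℤ_[p])), T' ∈ tubes p δ → z ∈ T' → w ∈ T' →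
        ‖(z.2 - w.2) - tslope p δ T' * (z.1 - w.1)‖ ≤ δ := by
      intro T' hT't hzT' hwT'
      rw [tube_spec hT't] at hzT' hwT'
      have h1 : ‖z.2 - (tslope p δ T' * z.1 + toffset p δ T')‖ ≤ δ := hzT'
      have h2 : ‖w.2 - (tslope p δ T' * w.1 + toffset p δ T')‖ ≤ δ := hwT'
      have e : (z.2 - w.2) - tslope p δ T' * (z.1 - w.1) =
          (z.2 - (tslope p δ T' * z.1 + toffset p δ T')) -
          (w.2 - (tslope p δ T' * w.1 + toffset p δ T')) := by ring
      rw [e]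
      exact le_trans (padic_norm_sub_le _ _) (max_le h1 h2)
    have hu : ‖(z.2 - w.2) - tslope p δ T * (z.1 - w.1)‖ ≤ δ := est T hTt hzT hwT
    have hu₀ : ‖(z.2 - w.2) - a₀ * (z.1 - w.1)‖ ≤ δ := est T₀ hT₀t hzT₀ hwT₀
    have h1n : ‖z.1 - w.1‖ = dist z w := by
      rw [Prod.dist_eq, dist_eq_norm, dist_eq_norm]
      rcases max_cases ‖z.1 - w.1‖ ‖z.2 - w.2‖ with ⟨he, _⟩ | ⟨he, hlt⟩
      · exact he.symm
      · exfalso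
        have hδ2 : δ < ‖z.2 - w.2‖ := by
          have hdd : dist z w = ‖z.2 - w.2‖ := by
            rw [Prod.dist_eq, dist_eq_norm, dist_eq_norm, he]
          rwa [hdd] at hδlt
        have e2 : z.2 - w.2 = ((z.2 - w.2) - tslope p δ T * (z.1 - w.1)) +
            tslope p δ T * (z.1 - w.1) := by ring
        have hb : ‖z.2 - w.2‖ ≤ max δ ‖z.1 - w.1‖ := by
          rw [e2]
          refine le_trans (PadicInt.nonarchimedean _ _) (max_le_max hu ?_)
          calc ‖tslope p δ T * (z.1 - w.1)‖ = ‖tslope p δ T‖ * ‖z.1 - w.1‖ :=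
                norm_mul _ _
            _ ≤ 1 * ‖z.1 - w.1‖ :=
                mul_le_mul_of_nonneg_right (PadicInt.norm_le_one _) (norm_nonneg _)
            _ = ‖z.1 - w.1‖ := one_mul _
        exact absurd hb (not_le.mpr (max_lt hδ2 hlt))
    have e3 : (tslope p δ T - a₀) * (z.1 - w.1) =
        ((z.2 - w.2) - a₀ * (z.1 - w.1)) - ((z.2 - w.2) - tslope p δ T * (z.1 - w.1)) := by ring
    have hmul : ‖tslope p δ T - a₀‖ * ‖z.1 - w.1‖ ≤ δ := by
      rw [← norm_mul, e3]
      exact le_trans (padic_norm_sub_le _ _) (max_le hu₀ hu)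
    rw [h1n, hd] at hmul
    have hpj : (0:ℝ) < (p:ℝ) ^ (-(j:ℤ)) := zpow_pos hppos _
    rw [← le_div_iff₀ hpj] at hmul
    calc ‖tslope p δ T - a₀‖ ≤ δ / (p:ℝ)^(-(j:ℤ)) := hmul
      _ = (p:ℝ) ^ ((j:ℤ) - n) := by
          rw [hδdef, ← zpow_sub₀ (ne_of_gt hppos)]; ring_nf
  have hdvd : ∀ T ∈ S, ∃ c : ℤ_[p], tslope p δ T - a₀ = (p : ℤ_[p]) ^ (n - j) * c := by
    intro T hT
    have h := key T hT
    have h2 : ‖tslope p δ T - a₀‖ ≤ (p:ℝ) ^ (-((n - j : ℕ) : ℤ)) := by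
      rwa [Nat.cast_sub hjn.le, neg_sub]
    rw [PadicInt.norm_le_pow_iff_mem_span_pow, Ideal.mem_span_singleton] at h2
    exact h2
  set g : Set (ℤ_[p] × ℤ_[p]) → ZMod (p ^ j) := fun T =>
    if h : ∃ c : ℤ_[p], tslope p δ T - a₀ = (p : ℤ_[p]) ^ (n - j) * c
    then PadicInt.toZModPow j h.choose else 0 with hg
  haveI : NeZero (p ^ j) := ⟨pow_ne_zero j hp.out.pos.ne'⟩
  have hinj : Set.InjOn g S := by
    intro T hT T' hT' heq
    have h1 := hdvd T hT
    have h2 := hdvd T' hT'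
    rw [hg] at heq
    simp only [dif_pos h1, dif_pos h2] at heq
    have hc1 := h1.choose_spec
    have hc2 := h2.choose_spec
    have hcc : ‖h1.choose - h2.choose‖ ≤ (p:ℝ) ^ (-(j:ℤ)) := by
      rw [PadicInt.norm_le_pow_iff_mem_span_pow, ← PadicInt.ker_toZModPow,
        RingHom.mem_ker, map_sub, sub_eq_zero]
      exact heq
    have haa : ‖tslope p δ T - tslope p δ T'‖ ≤ δ := by
      have e : tslope p δ T - tslope p δ T' =
          (p : ℤ_[p]) ^ (n - j) * (h1.choose - h2.choose) := by
        rw [mul_sub, ← hc1, ← hc2]; ring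
      rw [e, norm_mul, PadicInt.norm_p_pow]
      calc (p:ℝ) ^ (-((n-j:ℕ):ℤ)) * ‖h1.choose - h2.choose‖
          ≤ (p:ℝ) ^ (-((n-j:ℕ):ℤ)) * (p:ℝ) ^ (-(j:ℤ)) :=
            mul_le_mul_of_nonneg_left hcc (le_of_lt (zpow_pos hppos _))
        _ = δ := by
            rw [hδdef, ← zpow_add₀ (ne_of_gt hppos)]
            congr 1
            rw [Nat.cast_sub hjn.le]
            ring
    obtain ⟨hTt, hzT, _⟩ := hT
    obtain ⟨hT't, hzT', _⟩ := hT'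
    have hz1 : ‖z.2 - (tslope p δ T * z.1 + toffset p δ T)‖ ≤ δ := by
      rw [tube_spec hTt] at hzT; exact hzT
    have hz2 : ‖z.2 - (tslope p δ T' * z.1 + toffset p δ T')‖ ≤ δ := by
      rw [tube_spec hT't] at hzT'; exact hzT'
    have hbb : ‖toffset p δ T - toffset p δ T'‖ ≤ δ := by
      have e : toffset p δ T - toffset p δ T' =
          (z.2 - (tslope p δ T' * z.1 + toffset p δ T')) -
          (z.2 - (tslope p δ T * z.1 + toffset p δ T)) +
          (tslope p δ T' - tslope p δ T) * z.1 := by ring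
      rw [e]
      refine le_trans (PadicInt.nonarchimedean _ _) (max_le ?_ ?_)
      · exact le_trans (padic_norm_sub_le _ _) (max_le hz2 hz1)
      · calc ‖(tslope p δ T' - tslope p δ T) * z.1‖
            = ‖tslope p δ T' - tslope p δ T‖ * ‖z.1‖ := norm_mul _ _
          _ ≤ ‖tslope p δ T' - tslope p δ T‖ * 1 :=
              mul_le_mul_of_nonneg_left (PadicInt.norm_le_one _) (norm_nonneg _)
          _ ≤ δ := by rw [mul_one, norm_sub_rev]; exact haa
    rw [tube_spec hTt, tube_spec hT't]
    exact tube_eq_of_close haa hbb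
  calc S.ncard ≤ (Set.univ : Set (ZMod (p^j))).ncard :=
        Set.ncard_le_ncard_of_injOn g (fun _ _ => Set.mem_univ _) hinj Set.finite_univ
    _ = p ^ j := by rw [Set.ncard_univ, Nat.card_eq_fintype_card, ZMod.card]

end Aux

/-- A good pair of points for a tube `T`. -/
private def Fgood (p : ℕ) [Fact p.Prime] (Δ : ℝ) (T : Set (ℤ_[p] × ℤ_[p]))
    (z w : ℤ_[p] × ℤ_[p]) : Prop :=
  z ∈ T ∧ w ∈ T ∧ Δ < dist z w

set_option maxHeartbeats 2000000 in
/-- counting bound for the set of `(a,b)`-rich tubes. -/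
theorem statement1 :
    ∃ C : ℝ, 0 < C ∧
    ∀ (p : ℕ) [inst : Fact p.Prime] (n m : ℕ) (δ Δ : ℝ)
      (P : Multiset (ℤ_[p] × ℤ_[p])) (K : ℝ) (a b : ℕ)
      (𝒯ab : Set (Set (ℤ_[p] × ℤ_[p]))),
      δ = (p : ℝ) ^ (-(n : ℤ)) → Δ = (p : ℝ) ^ (-(m : ℤ)) → δ ≤ Δ → 2 ≤ a → 1 ≤ b →
      (∀ r : ℝ, Δ ≤ r → r ≤ 1 → ∀ x : ℤ_[p] × ℤ_[p],
        (mcount p P (Metric.closedBall x r) : ℝ) ≤ K * r * Multiset.card P) →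
      𝒯ab ⊆ tubes p δ →
      (∀ T ∈ 𝒯ab, a ≤ NDb p Δ P b T) →
      (Set.ncard 𝒯ab : ℝ) ≤
        C * K * Real.log (1 / Δ) * (Multiset.card P : ℝ) ^ 2 / ((a : ℝ) ^ 2 * (b : ℝ) ^ 2) := by
  refine ⟨3, by norm_num, ?_⟩
  intro p inst n m δ Δ P K a b 𝒯ab hδ hΔ hδΔ ha hb hspace h𝒯sub h𝒯rich
  have hp1 : (1:ℝ) < p := by exact_mod_cast inst.out.one_lt
  have hppos : (0:ℝ) < p := lt_trans one_pos hp1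
  have hΔpos : 0 < Δ := hΔ ▸ zpow_pos hppos _
  have hδpos : 0 < δ := hδ ▸ zpow_pos hppos _
  -- trivial case m = 0
  rcases Nat.eq_zero_or_pos m with hm0 | hm1
  · subst hm0
    have hΔ1 : Δ = 1 := by rw [hΔ]; norm_num
    have hT0 : 𝒯ab = ∅ := by
      by_contra hne
      obtain ⟨T, hT⟩ := Set.nonempty_iff_ne_empty.mpr hne
      have h2a := h𝒯rich T hT
      have hsub : {Q | Q ∈ cubes p Δ ∧ b ≤ mcount p P (T ∩ Q)} ⊆ {Set.univ} := by
        rintro Q ⟨⟨x, rfl⟩, -⟩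
        simp only [Set.mem_singleton_iff]
        ext z
        simp only [Metric.mem_closedBall, Set.mem_univ, iff_true, hΔ1]
        exact pt_dist_le_one z x
      have hle := Set.ncard_le_ncard hsub (Set.finite_singleton _)
      rw [Set.ncard_singleton] at hle
      rw [NDb] at h2a
      omega
    rw [hT0, hΔ1]
    simp
  -- main case
  have hmn : m ≤ n := by
    by_contra hcon
    push_neg at hcon
    have : Δ < δ := by
      rw [hδ, hΔ]
      exact zpow_lt_zpow_right₀ hp1 (by omega)
    linarith
  -- case P = 0
  rcases Nat.eq_zero_or_pos (Multiset.card P) with hP0 | hPpos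
  · have hPempty : P = 0 := Multiset.card_eq_zero.mp hP0
    have hT0 : 𝒯ab = ∅ := by
      by_contra hne
      obtain ⟨T, hT⟩ := Set.nonempty_iff_ne_empty.mpr hne
      have h2a := h𝒯rich T hT
      have hsub : {Q | Q ∈ cubes p Δ ∧ b ≤ mcount p P (T ∩ Q)} = ∅ := by
        ext Q
        simp only [Set.mem_setOf_eq, Set.mem_empty_iff_false, iff_false, not_and]
        intro _
        rw [mcount, hPempty]
        simp
        omega
      rw [NDb, hsub] at h2a
      simp at h2a
      omega
    rw [hT0, hP0]
    simp
  -- K ≥ 1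
  have hK1 : (1:ℝ) ≤ K := by
    have h1 := hspace 1 (by rw [hΔ]; exact zpow_le_one_of_nonpos₀ hp1.le (by omega)) le_rfl
      ((0 : ℤ_[p]), (0 : ℤ_[p]))
    have hball : P.filter (· ∈ Metric.closedBall ((0:ℤ_[p]), (0:ℤ_[p])) 1) = P := by
      rw [Multiset.filter_eq_self]
      intro z _
      exact pt_dist_le_one z _
    rw [mcount, hball] at h1
    have hc : (0:ℝ) < Multiset.card P := by exact_mod_cast hPpos
    nlinarith
  have hK0 : (0:ℝ) ≤ K := by linarith
  -- the finite set of tubes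
  have h𝒯fin : 𝒯ab.Finite := by
    apply (tubes_finite n).subset
    rwa [← hδ]
  set 𝒯 : Finset (Set (ℤ_[p] × ℤ_[p])) := h𝒯fin.toFinset with h𝒯def
  have hmem𝒯 : ∀ T, T ∈ 𝒯 ↔ T ∈ 𝒯ab := fun T => Set.Finite.mem_toFinset h𝒯fin
  have hcard𝒯 : Set.ncard 𝒯ab = 𝒯.card := Set.ncard_eq_toFinset_card 𝒯ab h𝒯fin
  -- STEP 1 : each tube supports many good pairs
  have step1 : ∀ T ∈ 𝒯, a * (b * ((a-1) * b)) ≤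
      (P.map (fun z => (cfilter (Fgood p Δ T z) P).card)).sum := by
    intro T hT
    have hful := h𝒯rich T ((hmem𝒯 T).mp hT)
    rw [NDb] at hful
    obtain ⟨tQ, htQsub, htQcard⟩ := Set.exists_subset_card_eq hful
    have htQfin : tQ.Finite := Set.finite_of_ncard_ne_zero (by omega)
    set tf : Finset (Set (ℤ_[p] × ℤ_[p])) := htQfin.toFinset with htf
    have htfmem : ∀ Q, Q ∈ tf ↔ Q ∈ tQ := fun Q => Set.Finite.mem_toFinset htQfin
    have htfcard : tf.card = a := by
      rw [← Set.ncard_eq_toFinset_card tQ htQfin, htQcard]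
    have hQprop : ∀ Q ∈ tf, Q ∈ cubes p Δ ∧ b ≤ (cfilter (· ∈ T ∩ Q) P).card := by
      intro Q hQ
      have h := htQsub ((htfmem Q).mp hQ)
      rw [Set.mem_setOf_eq, mcount, ← cfilter_eq] at h
      exact h
    have innerz : ∀ Q ∈ tf, ∀ z ∈ T ∩ Q, (a-1) * b ≤ (cfilter (Fgood p Δ T z) P).card := by
      intro Q hQ z hz
      set er := tf.erase Q with her
      have hsum : ∑ R ∈ er, cfilter (· ∈ T ∩ R) P ≤
          cfilter (fun x => ∃ R ∈ er, x ∈ T ∩ R) P := by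
        apply my_filter_sum_le
        intro R1 h1 R2 h2 hne x hx1 hx2
        exact hne (cube_eq_of_mem (hQprop R1 (Finset.mem_of_mem_erase h1)).1
          (hQprop R2 (Finset.mem_of_mem_erase h2)).1 hx1.2 hx2.2)
      have himp : cfilter (fun x => ∃ R ∈ er, x ∈ T ∩ R) P ≤ cfilter (Fgood p Δ T z) P := by
        apply cfilter_mono_pred
        rintro w ⟨R, hR, hwT, hwR⟩
        have hRQ : R ≠ Q := Finset.ne_of_mem_erase hR
        refine ⟨hz.1, hwT, ?_⟩
        exact cube_disjoint (hQprop Q hQ).1 (hQprop R (Finset.mem_of_mem_erase hR)).1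
          (fun h => hRQ h.symm) hz.2 hwR
      calc (a-1) * b = ∑ _R ∈ er, b := by
            rw [Finset.sum_const, Finset.card_erase_of_mem hQ, htfcard, smul_eq_mul]
        _ ≤ ∑ R ∈ er, (cfilter (· ∈ T ∩ R) P).card :=
            Finset.sum_le_sum (fun R hR => (hQprop R (Finset.mem_of_mem_erase hR)).2)
        _ = (∑ R ∈ er, cfilter (· ∈ T ∩ R) P).card := (my_card_finset_sum _ _).symm
        _ ≤ (cfilter (Fgood p Δ T z) P).card := Multiset.card_le_card (le_trans hsum himp)
    have perQ : ∀ Q ∈ tf, b * ((a-1) * b) ≤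
        ((cfilter (· ∈ T ∩ Q) P).map (fun z => (cfilter (Fgood p Δ T z) P).card)).sum := by
      intro Q hQ
      have helem : ∀ x ∈ (cfilter (· ∈ T ∩ Q) P).map (fun z => (cfilter (Fgood p Δ T z) P).card),
          (a-1) * b ≤ x := by
        intro x hx
        obtain ⟨z, hz, rfl⟩ := Multiset.mem_map.mp hx
        exact innerz Q hQ z (mem_cfilter.mp hz).2
      have h := Multiset.card_nsmul_le_sum helem
      rw [Multiset.card_map, smul_eq_mul] at h
      exact le_trans (Nat.mul_le_mul_right _ (hQprop Q hQ).2) h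
    have hmulti : ∑ Q ∈ tf, cfilter (· ∈ T ∩ Q) P ≤ P := by
      refine le_trans (my_filter_sum_le P tf (fun Q x => x ∈ T ∩ Q) ?_)
        (cfilter_le _ _)
      intro Q1 h1 Q2 h2 hne x hx1 hx2
      exact hne (cube_eq_of_mem (hQprop Q1 h1).1 (hQprop Q2 h2).1 hx1.2 hx2.2)
    calc a * (b * ((a-1) * b)) = ∑ _Q ∈ tf, b * ((a-1) * b) := by
          rw [Finset.sum_const, htfcard, smul_eq_mul]
      _ ≤ ∑ Q ∈ tf, ((cfilter (· ∈ T ∩ Q) P).map (fun z => (cfilter (Fgood p Δ T z) P).card)).sum :=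
          Finset.sum_le_sum perQ
      _ = ((∑ Q ∈ tf, cfilter (· ∈ T ∩ Q) P).map (fun z => (cfilter (Fgood p Δ T z) P).card)).sum := by
          rw [my_map_finset_sum, my_sum_finset_sum]
      _ ≤ (P.map (fun z => (cfilter (Fgood p Δ T z) P).card)).sum := my_sum_map_mono _ _ hmulti _
  -- STEP 2 : double counting
  have step2 : ∑ T ∈ 𝒯, (P.map (fun z => (cfilter (Fgood p Δ T z) P).card)).sum
      = (P.map (fun z =>
          (P.map (fun w => (𝒯.filter (fun T => Fgood p Δ T z w)).card)).sum)).sum := by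
    rw [my_sum_map_swap]
    refine congrArg Multiset.sum (Multiset.map_congr rfl ?_)
    intro z _
    rw [Finset.sum_congr rfl (fun T _ => my_card_filter_eq_sum P (Fgood p Δ T z)), my_sum_map_swap]
    refine congrArg Multiset.sum (Multiset.map_congr rfl ?_)
    intro w _
    rw [Finset.card_filter]
  -- STEP 3 : pointwise tube count
  have step3 : ∀ z w : ℤ_[p] × ℤ_[p],
      (𝒯.filter (fun T => Fgood p Δ T z w)).card ≤
        ∑ j ∈ Finset.range m, if dist z w = (p:ℝ) ^ (-(j:ℤ)) then p ^ j else 0 := by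
    intro z w
    by_cases hdzw : Δ < dist z w
    · obtain ⟨j, hj⟩ := dist_pow_form (lt_trans hΔpos hdzw)
      have hjm : j < m := by
        by_contra hge
        push_neg at hge
        have hle : dist z w ≤ Δ := by
          rw [hj, hΔ]
          exact zpow_le_zpow_right₀ hp1.le (by omega)
        linarith
      have hjn : j < n := lt_of_lt_of_le hjm hmn
      have hcount : (𝒯.filter (fun T => Fgood p Δ T z w)).card ≤ p ^ j := by
        have hsubS : ↑(𝒯.filter (fun T => Fgood p Δ T z w)) ⊆
            {T : Set (ℤ_[p] × ℤ_[p]) | T ∈ tubes p ((p:ℝ) ^ (-(n:ℤ))) ∧ z ∈ T ∧ w ∈ T} := by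
          intro T hT
          rw [Finset.mem_coe, Finset.mem_filter] at hT
          refine ⟨?_, hT.2.1, hT.2.2.1⟩
          rw [← hδ]
          exact h𝒯sub ((hmem𝒯 T).mp hT.1)
        have hSfin : ({T : Set (ℤ_[p] × ℤ_[p]) |
            T ∈ tubes p ((p:ℝ) ^ (-(n:ℤ))) ∧ z ∈ T ∧ w ∈ T}).Finite :=
          (tubes_finite n).subset (fun T hT => hT.1)
        calc (𝒯.filter (fun T => Fgood p Δ T z w)).card
            = (↑(𝒯.filter (fun T => Fgood p Δ T z w)) : Set (Set (ℤ_[p] × ℤ_[p]))).ncard :=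
              (Set.ncard_coe_finset _).symm
          _ ≤ _ := Set.ncard_le_ncard hsubS hSfin
          _ ≤ p ^ j := tube_two_point n j hjn z w hj
      refine le_trans hcount ?_
      have hsingle := Finset.single_le_sum
        (f := fun i : ℕ => if dist z w = (p:ℝ) ^ (-(i:ℤ)) then (p ^ i : ℕ) else 0)
        (fun i _ => Nat.zero_le _) (Finset.mem_range.mpr hjm)
      beta_reduce at hsingle
      rwa [if_pos hj] at hsingle
    · have hempty : 𝒯.filter (fun T => Fgood p Δ T z w) = ∅ := by
        apply Finset.filter_eq_empty_iff.mpr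
        intro T _
        exact fun hFT => hdzw hFT.2.2
      rw [hempty]
      simp
  -- STEP 4 : per-z bound
  have step4 : ∀ z : ℤ_[p] × ℤ_[p],
      (P.map (fun w => (𝒯.filter (fun T => Fgood p Δ T z w)).card)).sum ≤
      ∑ j ∈ Finset.range m, p ^ j * (cfilter (fun w => dist z w = (p:ℝ) ^ (-(j:ℤ))) P).card := by
    intro z
    calc (P.map (fun w => (𝒯.filter (fun T => Fgood p Δ T z w)).card)).sum
        ≤ (P.map (fun w =>
            ∑ j ∈ Finset.range m, if dist z w = (p:ℝ) ^ (-(j:ℤ)) then p ^ j else 0)).sum :=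
          Multiset.sum_map_le_sum_map _ _ (fun w _ => step3 z w)
      _ = ∑ j ∈ Finset.range m,
            (P.map (fun w => if dist z w = (p:ℝ) ^ (-(j:ℤ)) then p ^ j else 0)).sum :=
          (my_sum_map_swap _ _ _).symm
      _ = ∑ j ∈ Finset.range m,
            p ^ j * (cfilter (fun w => dist z w = (p:ℝ) ^ (-(j:ℤ))) P).card :=
          Finset.sum_congr rfl (fun j _ => my_sum_map_ite _ _ _)
  -- STEP 5 : real-valued bound per z
  have step5 : ∀ z : ℤ_[p] × ℤ_[p],
      ((∑ j ∈ Finset.range m,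
        p ^ j * (cfilter (fun w => dist z w = (p:ℝ) ^ (-(j:ℤ))) P).card : ℕ) : ℝ)
        ≤ m * (K * Multiset.card P) := by
    intro z
    push_cast
    have hterm : ∀ j ∈ Finset.range m,
        ((p:ℝ) ^ j * ((cfilter (fun w => dist z w = (p:ℝ) ^ (-(j:ℤ))) P).card : ℝ)) ≤
          K * Multiset.card P := by
      intro j hjm
      rw [Finset.mem_range] at hjm
      have hrΔ : Δ ≤ (p:ℝ) ^ (-(j:ℤ)) := by
        rw [hΔ]
        exact zpow_le_zpow_right₀ hp1.le (by omega)
      have hr1 : (p:ℝ) ^ (-(j:ℤ)) ≤ 1 := by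
        simpa using zpow_le_zpow_right₀ hp1.le (by omega : -(j:ℤ) ≤ 0)
      have hcnt : ((cfilter (fun w => dist z w = (p:ℝ) ^ (-(j:ℤ))) P).card : ℝ) ≤
          K * (p:ℝ) ^ (-(j:ℤ)) * Multiset.card P := by
        refine le_trans ?_ (hspace ((p:ℝ) ^ (-(j:ℤ))) hrΔ hr1 z)
        rw [mcount, ← cfilter_eq]
        have hmono : cfilter (fun w => dist z w = (p:ℝ) ^ (-(j:ℤ))) P ≤
            cfilter (· ∈ Metric.closedBall z ((p:ℝ) ^ (-(j:ℤ)))) P := by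
          apply cfilter_mono_pred
          intro w hw
          rw [Metric.mem_closedBall, dist_comm]
          exact le_of_eq hw
        exact_mod_cast Multiset.card_le_card hmono
      have hpjpos : (0:ℝ) < (p:ℝ) ^ j := pow_pos hppos _
      have hid : (p:ℝ) ^ j * (p:ℝ) ^ (-(j:ℤ)) = 1 := by
        rw [← zpow_natCast (p:ℝ) j, ← zpow_add₀ (ne_of_gt hppos)]
        simp
      calc (p:ℝ) ^ j * ((cfilter (fun w => dist z w = (p:ℝ) ^ (-(j:ℤ))) P).card : ℝ)
          ≤ (p:ℝ) ^ j * (K * (p:ℝ) ^ (-(j:ℤ)) * Multiset.card P) :=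
            mul_le_mul_of_nonneg_left hcnt (le_of_lt hpjpos)
        _ = ((p:ℝ) ^ j * (p:ℝ) ^ (-(j:ℤ))) * (K * Multiset.card P) := by ring
        _ = K * Multiset.card P := by rw [hid, one_mul]
    calc ∑ j ∈ Finset.range m,
          ((p:ℝ) ^ j * ((cfilter (fun w => dist z w = (p:ℝ) ^ (-(j:ℤ))) P).card : ℝ))
        ≤ ∑ _j ∈ Finset.range m, K * Multiset.card P := Finset.sum_le_sum hterm
      _ = m * (K * Multiset.card P) := by
          rw [Finset.sum_const, Finset.card_range, nsmul_eq_mul]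
  -- combine everything
  have hbig : 𝒯.card * (a * (b * ((a-1) * b))) ≤
      (P.map (fun z =>
        (P.map (fun w => (𝒯.filter (fun T => Fgood p Δ T z w)).card)).sum)).sum := by
    rw [← step2]
    have h := Finset.card_nsmul_le_sum 𝒯 _ _ step1
    rwa [smul_eq_mul] at h
  have hfinal : ((𝒯.card * (a * (b * ((a-1) * b))) : ℕ) : ℝ) ≤
      (Multiset.card P : ℝ) * (m * (K * Multiset.card P)) := by
    have h2 : ∀ z, (((P.map (fun w => (𝒯.filter (fun T => Fgood p Δ T z w)).card)).sum : ℕ) : ℝ) ≤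
        m * (K * Multiset.card P) := by
      intro z
      refine le_trans ?_ (step5 z)
      exact_mod_cast step4 z
    have hcast : (((P.map (fun z =>
        (P.map (fun w => (𝒯.filter (fun T => Fgood p Δ T z w)).card)).sum)).sum : ℕ) : ℝ) =
        (P.map (fun z =>
          (((P.map (fun w => (𝒯.filter (fun T => Fgood p Δ T z w)).card)).sum : ℕ) : ℝ))).sum := by
      rw [Nat.cast_multiset_sum, Multiset.map_map]
      rfl
    have hle : (P.map (fun z =>
        (((P.map (fun w => (𝒯.filter (fun T => Fgood p Δ T z w)).card)).sum : ℕ) : ℝ))).sum ≤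
        (Multiset.card (P.map (fun z =>
          (((P.map (fun w => (𝒯.filter (fun T => Fgood p Δ T z w)).card)).sum : ℕ) : ℝ)))) •
          (m * (K * Multiset.card P)) := by
      apply Multiset.sum_le_card_nsmul
      intro x hx
      obtain ⟨z, _, rfl⟩ := Multiset.mem_map.mp hx
      exact h2 z
    rw [Multiset.card_map, nsmul_eq_mul] at hle
    calc ((𝒯.card * (a * (b * ((a-1) * b))) : ℕ) : ℝ)
        ≤ (((P.map (fun z =>
            (P.map (fun w => (𝒯.filter (fun T => Fgood p Δ T z w)).card)).sum)).sum : ℕ) : ℝ) := by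
          exact_mod_cast hbig
      _ = _ := hcast
      _ ≤ (Multiset.card P : ℝ) * (m * (K * Multiset.card P)) := hle
  -- endgame over ℝ
  rw [hcard𝒯]
  have hmain : (𝒯.card : ℝ) * ((a:ℝ) * ((b:ℝ) * (((a:ℝ) - 1) * (b:ℝ)))) ≤
      (Multiset.card P : ℝ) * ((m:ℝ) * (K * (Multiset.card P : ℝ))) := by
    have h := hfinal
    push_cast [Nat.cast_sub (by omega : 1 ≤ a)] at h
    linarith
  have hL : Real.log (1/Δ) = (m:ℝ) * Real.log p := by
    rw [hΔ, one_div, ← zpow_neg, neg_neg, Real.log_zpow]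
    push_cast
    ring
  have hlog2 : (0.6931:ℝ) < Real.log 2 := by
    have := Real.log_two_gt_d9
    linarith
  have hlogp : Real.log 2 ≤ Real.log p := by
    apply Real.log_le_log (by norm_num)
    exact_mod_cast inst.out.two_le
  have hm0' : (1:ℝ) ≤ (m:ℝ) := by exact_mod_cast hm1
  have hA2 : (2:ℝ) ≤ (a:ℝ) := by exact_mod_cast ha
  have hB1 : (1:ℝ) ≤ (b:ℝ) := by exact_mod_cast hb
  have hN0 : (0:ℝ) ≤ (𝒯.card : ℝ) := Nat.cast_nonneg _
  have hP1 : (1:ℝ) ≤ (Multiset.card P : ℝ) := by exact_mod_cast hPpos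
  have hABpos : (0:ℝ) < (a:ℝ)^2 * (b:ℝ)^2 :=
    mul_pos (pow_pos (by linarith) 2) (pow_pos (by linarith) 2)
  rw [le_div_iff₀ hABpos]
  have key1 : (𝒯.card : ℝ) * ((a:ℝ)^2 * (b:ℝ)^2) ≤
      2 * ((𝒯.card : ℝ) * ((a:ℝ) * ((b:ℝ) * (((a:ℝ) - 1) * (b:ℝ))))) := by
    nlinarith [mul_nonneg (mul_nonneg (mul_nonneg hN0 (by linarith : (0:ℝ) ≤ (a:ℝ)))
      (mul_nonneg (by linarith : (0:ℝ) ≤ (b:ℝ)) (by linarith : (0:ℝ) ≤ (b:ℝ))))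
      (by linarith : (0:ℝ) ≤ (a:ℝ) - 2)]
  have key2 : 2 * ((Multiset.card P : ℝ) * ((m:ℝ) * (K * (Multiset.card P : ℝ)))) ≤
      3 * K * Real.log (1/Δ) * (Multiset.card P : ℝ)^2 := by
    rw [hL]
    have h1 : (2:ℝ) * (m:ℝ) ≤ 3 * ((m:ℝ) * Real.log p) := by nlinarith
    nlinarith [mul_nonneg (by linarith : (0:ℝ) ≤ 3 * ((m:ℝ) * Real.log p) - 2 * (m:ℝ))
      (mul_nonneg hK0 (sq_nonneg (Multiset.card P : ℝ)))]
  calc (𝒯.card : ℝ) * ((a:ℝ)^2 * (b:ℝ)^2)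
      ≤ 2 * ((𝒯.card : ℝ) * ((a:ℝ) * ((b:ℝ) * (((a:ℝ) - 1) * (b:ℝ))))) := key1
    _ ≤ 2 * ((Multiset.card P : ℝ) * ((m:ℝ) * (K * (Multiset.card P : ℝ)))) := by linarith
    _ ≤ 3 * K * Real.log (1/Δ) * (Multiset.card P : ℝ)^2 := key2
end
end

section
/- Let $\mathcal{P}$ be a multiset of points in $\mathbb{Z}_p^2$, uniform across scales $\Delta^{k\epsilon}$ for $1 \le k \le \epsilon^{-1}$ (each $\Delta^{k\epsilon}$-cube of $\mathcal{P}$ contains about the same number of points). Suppose some scale $w = \Delta^{k\epsilon}$ satisfies $a > 2\Delta^{-\epsilon} \cdot \rho |\mathbb{D}_{\rho}(\mathcal{P})|$ fails for all $\rho = \Delta^{m\epsilon}$ with $m > k$ (i.e., $a \le 2\Delta^{-\epsilon}\rho|\mathbb{D}_\rho(\mathcal{P})|$ for all finer listed scales) but holds at scale $w$. Then for every $w$-cube $Q$ of $\mathcal{P}$, the rescaled set $\phi_Q(\mathcal{P} \cap Q)$ is a $(\Delta/w, 1, C\Delta^{-\epsilon})$-set: for all $r \in [\Delta/w, 1]$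 and every $r$-ball $B$, $|\phi_Q(\mathcal{P}\cap Q) \cap B| \le C\Delta^{-\epsilon} \cdot r \cdot |\mathcal{P} \cap Q|$. -/
open scoped Classical

noncomputable section

/-
In an ultrametric space the `δ`-cubes meeting `𝒫` partition `𝒫`, so uniformity at scale `δ`
pins every cube count to within a factor `2` of `|𝒫| / |𝔻_δ(𝒫)|`. Write `r = Δ^{nε} · θ` with
`Δ^ε < θ ≤ 1` and put `ρ = Δ^{(k+n)ε} ≥ r w`, a listed scale finer than `w`. The two conditions on
`a` give `w |𝔻_w(𝒫)| ≤ ρ |𝔻_ρ(𝒫)|`, hence an `r w`-ball, lying in a single `ρ`-cube, carries at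
most `4 (ρ / w) |𝒫 ∩ Q| = 4 Δ^{nε} |𝒫 ∩ Q| ≤ 4 Δ^{-ε} r |𝒫 ∩ Q|` points.
-/

instance Prod.instIsUltrametricDist {X Y : Type*} [PseudoMetricSpace X] [PseudoMetricSpace Y]
    [IsUltrametricDist X] [IsUltrametricDist Y] : IsUltrametricDist (X × Y) := by
  constructor
  intro x y z
  simp only [Prod.dist_eq]
  refine max_le ?_ ?_
  · exact (dist_triangle_max _ y.1 _).trans (max_le_max (le_max_left _ _) (le_max_left _ _))
  · exact (dist_triangle_max _ y.2 _).trans (max_le_max (le_max_right _ _) (le_max_right _ _))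

lemma IsUltrametricDist.mem_closedBall_iff_closedBall_eq {X : Type*} [PseudoMetricSpace X]
    [IsUltrametricDist X] {x y : X} {δ : ℝ} (hδ : 0 ≤ δ) :
    y ∈ Metric.closedBall x δ ↔ Metric.closedBall y δ = Metric.closedBall x δ :=
  ⟨fun h => (closedBall_eq_of_mem h).symm, fun h => h ▸ Metric.mem_closedBall_self hδ⟩

def IsUniformAt (p : ℕ) [Fact p.Prime] (δ : ℝ) (P : Multiset (ℤ_[p] × ℤ_[p])) : Prop :=
  ∀ Q ∈ cubesOf p δ P, ∀ Q' ∈ cubesOf p δ P, mcount p P Q ≤ 2 * mcount p P Q'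

section Cubes

variable {p : ℕ} [Fact p.Prime] {δ : ℝ} {P : Multiset (ℤ_[p] × ℤ_[p])}

lemma mcount_mono {A B : Set (ℤ_[p] × ℤ_[p])} (h : A ⊆ B) : mcount p P A ≤ mcount p P B :=
  Multiset.card_le_card (Multiset.monotone_filter_right P fun _ hz => h hz)

def cubeMultiset (δ : ℝ) (P : Multiset (ℤ_[p] × ℤ_[p])) : Multiset (Set (ℤ_[p] × ℤ_[p])) :=
  P.map (Metric.closedBall · δ)

lemma mcount_closedBall_eq_count (hδ : 0 ≤ δ) (x : ℤ_[p] × ℤ_[p]) :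
    mcount p P (Metric.closedBall x δ) = (cubeMultiset δ P).count (Metric.closedBall x δ) := by
  rw [cubeMultiset, Multiset.count_map, mcount]
  congr 1
  refine Multiset.filter_congr fun z _ => ?_
  rw [IsUltrametricDist.mem_closedBall_iff_closedBall_eq hδ, eq_comm]

lemma cubesOf_eq_toFinset (hδ : 0 ≤ δ) : cubesOf p δ P = ↑(cubeMultiset δ P).toFinset := by
  ext Q
  simp only [cubesOf, cubes, Set.mem_ofPred_eq, Finset.mem_coe, Multiset.mem_toFinset,
    cubeMultiset, Multiset.mem_map]
  constructor
  · rintro ⟨⟨x, rfl⟩, hpos⟩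
    rw [mcount_closedBall_eq_count hδ] at hpos
    simpa [cubeMultiset] using Multiset.count_pos.mp hpos
  · rintro ⟨z, hz, rfl⟩
    refine ⟨⟨z, rfl⟩, ?_⟩
    rw [mcount_closedBall_eq_count hδ]
    exact Multiset.count_pos.mpr (Multiset.mem_map_of_mem _ hz)

lemma mcount_eq_count_of_mem_cubesOf (hδ : 0 ≤ δ) {Q : Set (ℤ_[p] × ℤ_[p])}
    (hQ : Q ∈ cubesOf p δ P) : mcount p P Q = (cubeMultiset δ P).count Q := by
  obtain ⟨⟨x, rfl⟩, -⟩ := hQ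
  exact mcount_closedBall_eq_count hδ x

lemma sum_mcount_cubesOf (hδ : 0 ≤ δ) :
    ∑ Q ∈ (cubeMultiset δ P).toFinset, mcount p P Q = Multiset.card P := by
  have hmem (Q) (hQ : Q ∈ (cubeMultiset δ P).toFinset) : Q ∈ cubesOf p δ P := by
    rwa [cubesOf_eq_toFinset hδ]
  rw [Finset.sum_congr rfl fun Q hQ => mcount_eq_count_of_mem_cubesOf hδ (hmem Q hQ),
    Multiset.toFinset_sum_count_eq, cubeMultiset, Multiset.card_map]

lemma card_le_two_mul_ncard_mul_mcount (hδ : 0 ≤ δ) (hu : IsUniformAt p δ P)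
    {Q : Set (ℤ_[p] × ℤ_[p])} (hQ : Q ∈ cubesOf p δ P) :
    Multiset.card P ≤ 2 * (cubesOf p δ P).ncard * mcount p P Q := by
  have h := Finset.sum_le_card_nsmul _ _ _ fun Q' hQ' =>
    hu Q' (by rwa [cubesOf_eq_toFinset hδ]) Q hQ
  rw [sum_mcount_cubesOf hδ, smul_eq_mul] at h
  rw [cubesOf_eq_toFinset hδ, Set.ncard_coe_finset]
  linarith

lemma ncard_mul_mcount_le_two_mul_card (hδ : 0 ≤ δ) (hu : IsUniformAt p δ P)
    {Q : Set (ℤ_[p] × ℤ_[p])} (hQ : Q ∈ cubesOf p δ P) :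
    (cubesOf p δ P).ncard * mcount p P Q ≤ 2 * Multiset.card P := by
  have h := Finset.card_nsmul_le_sum _ _ _ fun Q' hQ' =>
    hu Q hQ Q' (by rwa [cubesOf_eq_toFinset hδ])
  rw [← Finset.mul_sum, sum_mcount_cubesOf hδ, smul_eq_mul] at h
  rwa [cubesOf_eq_toFinset hδ, Set.ncard_coe_finset]

lemma mcount_closedBall_le_of_mul_ncard_le {w ρ : ℝ} (hw : 0 < w) (hρ : 0 ≤ ρ)
    (huw : IsUniformAt p w P) (huρ : IsUniformAt p ρ P)
    (hN : w * (cubesOf p w P).ncard ≤ ρ * (cubesOf p ρ P).ncard)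
    {Q : Set (ℤ_[p] × ℤ_[p])} (hQ : Q ∈ cubesOf p w P) (x : ℤ_[p] × ℤ_[p]) :
    (mcount p P (Metric.closedBall x ρ) : ℝ) ≤ 4 * (ρ / w) * mcount p P Q := by
  rcases Nat.eq_zero_or_pos (mcount p P (Metric.closedBall x ρ)) with h0 | hpos
  · rw [h0, Nat.cast_zero]
    positivity
  have hB : Metric.closedBall x ρ ∈ cubesOf p ρ P := ⟨⟨x, rfl⟩, hpos⟩
  have hNρ : (0 : ℝ) < (cubesOf p ρ P).ncard := by
    rw [Nat.cast_pos, cubesOf_eq_toFinset hρ, Set.ncard_coe_finset, Finset.card_pos]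
    exact ⟨_, by rwa [← Finset.mem_coe, ← cubesOf_eq_toFinset hρ]⟩
  have hupper : ((cubesOf p ρ P).ncard : ℝ) * mcount p P (Metric.closedBall x ρ) ≤
      2 * Multiset.card P := by exact_mod_cast ncard_mul_mcount_le_two_mul_card hρ huρ hB
  have hlower : (Multiset.card P : ℝ) ≤ 2 * (cubesOf p w P).ncard * mcount p P Q := by
    exact_mod_cast card_le_two_mul_ncard_mul_mcount hw.le huw hQ
  rw [mul_div_assoc', div_mul_eq_mul_div, le_div_iff₀ hw]
  refine le_of_mul_le_mul_left ?_ hNρ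
  calc ((cubesOf p ρ P).ncard : ℝ) * (mcount p P (Metric.closedBall x ρ) * w)
      ≤ 4 * (w * (cubesOf p w P).ncard) * mcount p P Q := by nlinarith
    _ ≤ 4 * (ρ * (cubesOf p ρ P).ncard) * mcount p P Q := by gcongr
    _ = (cubesOf p ρ P).ncard * (4 * ρ * mcount p P Q) := by ring

end Cubes

lemma exists_rpow_nat_mul_near {Δ ε r : ℝ} (hΔ0 : 0 < Δ) (hΔ1 : Δ < 1) (hε : 0 < ε)
    (hr0 : 0 < r) (hr1 : r ≤ 1) :
    ∃ n : ℕ, Δ ^ (((n : ℝ) + 1) * ε) < r ∧ r ≤ Δ ^ ((n : ℝ) * ε) := by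
  have hpow (x : ℝ) : Δ ^ (x * ε) = (Δ ^ ε) ^ x := by rw [mul_comm, Real.rpow_mul hΔ0.le]
  obtain ⟨n, hlt, hle⟩ := exists_nat_pow_near_of_lt_one hr0 hr1 (Real.rpow_pos_of_pos hΔ0 ε)
    (Real.rpow_lt_one hΔ0.le hΔ1 hε)
  refine ⟨n, ?_, ?_⟩
  · rwa [hpow, ← Nat.cast_succ, Real.rpow_natCast]
  · rwa [hpow, Real.rpow_natCast]

lemma exists_scale_rounding {Δ ε r : ℝ} {K k : ℕ} (hΔ0 : 0 < Δ) (hΔ1 : Δ < 1) (hK : 0 < K)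
    (hε : ε = 1 / K) (hr_lo : Δ ^ ((1 : ℝ) - k * ε) ≤ r) (hr_hi : r ≤ 1) :
    ∃ n : ℕ, k + n ≤ K ∧ r ≤ Δ ^ ((n : ℝ) * ε) ∧ Δ ^ ((n : ℝ) * ε) ≤ Δ ^ (-ε) * r := by
  have hε0 : 0 < ε := by rw [hε]; positivity
  have hr0 : 0 < r := (Real.rpow_pos_of_pos hΔ0 _).trans_le hr_lo
  obtain ⟨n, hr_gt, hr_le⟩ := exists_rpow_nat_mul_near hΔ0 hΔ1 hε0 hr0 hr_hi
  refine ⟨n, ?_, hr_le, ?_⟩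
  · have h := (Real.rpow_le_rpow_left_iff_of_base_lt_one hΔ0 hΔ1).mp (hr_lo.trans hr_le)
    have hKε : (K : ℝ) * ε = 1 := by rw [hε]; field_simp
    have : ((k + n : ℕ) : ℝ) ≤ K := by push_cast; nlinarith
    exact_mod_cast this
  · calc Δ ^ ((n : ℝ) * ε) = Δ ^ (-ε) * Δ ^ (((n : ℝ) + 1) * ε) := by
          rw [← Real.rpow_add hΔ0]; ring_nf
      _ ≤ Δ ^ (-ε) * r := by gcongr

/-- at the chosen intermediate scale `w = Δ^{kε}`, the rescaled set
`φ_Q(𝒫 ∩ Q)` is a `(Δ/w, 1, CΔ^{-ε})`-set; equivalently (via the canonical similarity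
`φ_Q : Q → ℤ_p²`), for all `r ∈ [Δ/w, 1]` every `rw`-ball inside `Q` contains at most
`C Δ^{-ε} r |𝒫 ∩ Q|` points of `𝒫 ∩ Q`. -/
theorem statement7 :
    ∃ C : ℝ, 0 < C ∧
    ∀ (p : ℕ) [inst : Fact p.Prime] (Δ ε a : ℝ) (K k : ℕ)
      (P : Multiset (ℤ_[p] × ℤ_[p])),
      0 < Δ → Δ < 1 → 0 < K → ε = 1 / K → 1 ≤ k → k ≤ K →
      -- 𝒫 is uniform at the scales Δ^{jε}, 1 ≤ j ≤ ε⁻¹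
      (∀ j : ℕ, 1 ≤ j → j ≤ K →
        ∀ Q ∈ cubesOf p (Δ ^ ((j : ℝ) * ε)) P, ∀ Q' ∈ cubesOf p (Δ ^ ((j : ℝ) * ε)) P,
          mcount p P Q ≤ 2 * mcount p P Q') →
      -- the condition a > 2Δ^{-ε} ρ |𝔻_ρ(𝒫)| holds at scale w = Δ^{kε} ...
      (2 * Δ ^ (-ε) * Δ ^ ((k : ℝ) * ε) *
          (Set.ncard (cubesOf p (Δ ^ ((k : ℝ) * ε)) P) : ℝ) < a) →
      -- ... and fails at all finer listed scales ρ = Δ^{mε}, m > k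
      (∀ m : ℕ, k < m → m ≤ K →
        a ≤ 2 * Δ ^ (-ε) * Δ ^ ((m : ℝ) * ε) *
          (Set.ncard (cubesOf p (Δ ^ ((m : ℝ) * ε)) P) : ℝ)) →
      ∀ Q ∈ cubesOf p (Δ ^ ((k : ℝ) * ε)) P,
        ∀ r : ℝ, Δ ^ ((1 : ℝ) - (k : ℝ) * ε) ≤ r → r ≤ 1 → ∀ x : ℤ_[p] × ℤ_[p], x ∈ Q →
          (mcount p P (Q ∩ Metric.closedBall x (r * Δ ^ ((k : ℝ) * ε))) : ℝ) ≤
            C * Δ ^ (-ε) * r * (mcount p P Q : ℝ) := by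
  refine ⟨4, by norm_num, ?_⟩
  intro p _ Δ ε a K k P hΔ0 hΔ1 hK hε hk1 hkK hunif hwin hfail Q hQ r hr_lo hr_hi x _
  obtain ⟨n, hnK, hr_le, hscale⟩ := exists_scale_rounding hΔ0 hΔ1 hK hε hr_lo hr_hi
  set w := Δ ^ ((k : ℝ) * ε)
  set ρ := Δ ^ (((k + n : ℕ) : ℝ) * ε)
  have hw : 0 < w := Real.rpow_pos_of_pos hΔ0 _
  have hρ : ρ = w * Δ ^ ((n : ℝ) * ε) := by
    rw [← Real.rpow_add hΔ0, ← add_mul, ← Nat.cast_add]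
  have hN : w * (cubesOf p w P).ncard ≤ ρ * (cubesOf p ρ P).ncard := by
    rcases Nat.eq_zero_or_pos n with rfl | hn
    · rfl
    · have h := hwin.trans_le (hfail (k + n) (by omega) hnK)
      rw [mul_assoc (2 * Δ ^ (-ε)), mul_assoc (2 * Δ ^ (-ε))] at h
      exact (lt_of_mul_lt_mul_left h (by positivity)).le
  calc (mcount p P (Q ∩ Metric.closedBall x (r * w)) : ℝ)
      ≤ mcount p P (Metric.closedBall x ρ) := by
        refine Nat.cast_le.mpr (mcount_mono (Set.inter_subset_right.trans
          (Metric.closedBall_subset_closedBall ?_)))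
        rw [hρ, mul_comm]
        gcongr
    _ ≤ 4 * (ρ / w) * mcount p P Q :=
        mcount_closedBall_le_of_mul_ncard_le hw (by positivity) (hunif k hk1 hkK)
          (hunif (k + n) (by omega) hnK) hN hQ x
    _ ≤ 4 * Δ ^ (-ε) * r * mcount p P Q := by
        rw [hρ, mul_div_cancel_left₀ _ hw.ne', mul_assoc 4 (Δ ^ (-ε))]
        gcongr
end
end
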